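/- arXiv:2408.07078 — 19 statements merged into one kernel-verified Lean document; each statement's English description precedes it below -/
import Mathlib

section
/- In any shift associative algebra, the identity (xy)(zt) = (yx)(tz) holds. -/
theorem stmt_1 {A : Type*} [NonUnitalNonAssocRing A]
    (shift : ∀ x y z : A, (x * y) * z = y * (z * x)) :
    ∀ x y z t : A, (x * y) * (z * t) = (y * x) * (t * z) := by
  intro x y z t
  rw [shift x y (z*t), shift z t x, ← shift (x*z) y t, shift x z y, shift z (y*x) t]
end

section
/- In any shift associative algebra over a field of characteristic not 2, the identity z∘[x,y] + y∘[x,z] = [z, x∘y] + [y, x∘z] holds, where [a,b] = (1/2)(ab - ba) and a∘b = (1/2)(ab + ba). -/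
theorem stmt_2 {K A : Type*} [Field K] [NonUnitalNonAssocRing A] [Module K A]
    [IsScalarTower K A A] [SMulCommClass K A A] (h2 : (2 : K) ≠ 0)
    (shift : ∀ x y z : A, (x * y) * z = y * (z * x)) :
    ∀ x y z : A,
      (let o : A → A → A := fun a b => (2 : K)⁻¹ • (a * b + b * a)
       let c : A → A → A := fun a b => (2 : K)⁻¹ • (a * b - b * a)
       o z (c x y) + o y (c x z) = c z (o x y) + c y (o x z)) := by
  intro x y z
  simp only [mul_smul_comm, smul_mul_assoc, ← smul_add, ← smul_sub]
  congr 2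
  simp only [mul_sub, mul_add, sub_mul, add_mul]
  rw [shift x y z, shift x z y]
  abel
end

section
/- If A is a shift associative algebra over a field of characteristic not 2, then A with the products a∘b = (1/2)(ab+ba) and [a,b] = (1/2)(ab-ba) satisfies the anti-Leibniz identity [x∘y, z] = -( x∘[y,z] + [x,z]∘y ). -/
theorem stmt_3 {K A : Type*} [Field K] [NonUnitalNonAssocRing A] [Module K A]
    [IsScalarTower K A A] [SMulCommClass K A A] (h2 : (2 : K) ≠ 0)
    (shift : ∀ x y z : A, (x * y) * z = y * (z * x)) :
    ∀ x y z : A,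
      (let o : A → A → A := fun a b => (2 : K)⁻¹ • (a * b + b * a)
       let c : A → A → A := fun a b => (2 : K)⁻¹ • (a * b - b * a)
       c (o x y) z = -(o x (c y z) + o (c x z) y)) := by
  intro x y z
  simp only
  have key : (x*y+y*x)*z - z*(x*y+y*x)
      = -((x*(y*z-z*y) + (y*z-z*y)*x) + ((x*z-z*x)*y + y*(x*z-z*x))) := by
    simp only [mul_sub, sub_mul, mul_add, add_mul, ← shift]
    abel
  simp only [smul_mul_assoc, mul_smul_comm, ← smul_add, ← smul_sub, ← smul_neg]
  rw [key]
end

section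
/- If A is a shift associative algebra over a field of characteristic not 2, then A satisfies [x, y∘z] + [z, x∘y] + [y, x∘z] = 0, where [a,b] = (1/2)(ab-ba) and a∘b = (1/2)(ab+ba). -/
theorem stmt_4 {K A : Type*} [Field K] [NonUnitalNonAssocRing A] [Module K A]
    [IsScalarTower K A A] [SMulCommClass K A A] (h2 : (2 : K) ≠ 0)
    (shift : ∀ x y z : A, (x * y) * z = y * (z * x)) :
    ∀ x y z : A,
      (let o : A → A → A := fun a b => (2 : K)⁻¹ • (a * b + b * a)
       let c : A → A → A := fun a b => (2 : K)⁻¹ • (a * b - b * a)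
       c x (o y z) + c z (o x y) + c y (o x z) = 0) := by
  intro x y z
  simp only [mul_smul_comm, smul_mul_assoc, ← smul_sub, ← smul_add]
  have key : x * (y * z + z * y) - (y * z + z * y) * x +
      (z * (x * y + y * x) - (x * y + y * x) * z) +
      (y * (x * z + z * x) - (x * z + z * x) * y) = 0 := by
    simp only [mul_add, add_mul]
    rw [shift y z x, shift z y x, shift x y z, shift y x z, shift x z y, shift z x y]
    abel
  rw [key, smul_zero, smul_zero]
end

section
/- Let A be a shift associative algebra over a field of characteristic not 2. Then the symmetrized product a∘b = (1/2)(ab+ba) satisfies the Jordan identity ((x∘x)∘y)∘x = (x∘x)∘(y∘x). -/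
theorem stmt_5 {K A : Type*} [Field K] [NonUnitalNonAssocRing A] [Module K A]
    [IsScalarTower K A A] [SMulCommClass K A A] (h2 : (2 : K) ≠ 0)
    (shift : ∀ x y z : A, (x * y) * z = y * (z * x)) :
    ∀ x y : A,
      (let o : A → A → A := fun a b => (2 : K)⁻¹ • (a * b + b * a)
       o (o (o x x) y) x = o (o x x) (o y x)) := by
  intro x y
  dsimp only
  have hxx : (2 : K)⁻¹ • (x * x + x * x) = x * x := by
    rw [← two_smul K (x * x), smul_smul, inv_mul_cancel₀ h2, one_smul]
  rw [hxx]
  set s := x * x with hs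
  have assoc2 : ∀ a b c : A, a * (b * c) = (c * a) * b := fun a b c => (shift c a b).symm
  have hsx : s * x = x * s := by rw [hs, shift]
  have key : (s * y + y * s) * x + x * (s * y + y * s)
      = s * (y * x + x * y) + (y * x + x * y) * s := by
    rw [add_mul, mul_add, mul_add, add_mul]
    rw [shift s y x, shift y s x, assoc2 x s y, assoc2 x y s]
    rw [assoc2 s y x, shift x y s, hsx]
    abel
  rw [smul_mul_assoc, mul_smul_comm, ← smul_add, key, mul_smul_comm, smul_mul_assoc,
    ← smul_add]
end

section
/- Let A be a shift associative algebra. Then the commutator [a,b] = ab - ba satisfies the Jacobi identity, i.e., [[x,y],z] + [[y,z],x] + [[z,x],y] = 0. -/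
theorem stmt_6 {A : Type*} [NonUnitalNonAssocRing A]
    (shift : ∀ x y z : A, (x * y) * z = y * (z * x)) :
    ∀ x y z : A,
      (let c : A → A → A := fun a b => a * b - b * a
       c (c x y) z + c (c y z) x + c (c z x) y = 0) := by
  intro x y z
  simp only [sub_mul, mul_sub, shift]
  abel
end

section
/- Every unital shift associative algebra is commutative and associative. -/
theorem stmt_7 {A : Type*} [NonAssocRing A]
    (shift : ∀ x y z : A, (x * y) * z = y * (z * x)) :
    (∀ x y : A, x * y = y * x) ∧ (∀ x y z : A, (x * y) * z = x * (y * z)) := by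
  have comm : ∀ x y : A, x * y = y * x := by
    intro x y
    have := shift x y 1
    simpa using this
  refine ⟨comm, fun x y z => ?_⟩
  have := shift y z x
  rw [comm (y*z) x] at this
  rw [comm z (x*y)] at this
  exact this.symm
end

section
/- In a shift associative algebra, any product of 5 elements is independent of the bracketing and of the order of the factors; in particular ((((ab)c)d)e) = ((((a'b')c')d')e') for any permutation (a',b',c',d',e') of (a,b,c,d,e) and any two bracketings give the same value. -/
inductive BTree (α : Type*) where
  | leaf : α → BTree α
  | node : BTree α → BTree α → BTree α

def BTree.eval {A : Type*} [Mul A] : BTree A → A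
  | .leaf a => a
  | .node l r => l.eval * r.eval

def BTree.leaves {α : Type*} : BTree α → List α
  | .leaf a => [a]
  | .node l r => l.leaves ++ r.leaves

section Aux

variable {A : Type*} [NonUnitalNonAssocRing A]
  (shift : ∀ x y z : A, (x * y) * z = y * (z * x))

private def LL : List A → A
  | a :: b :: c :: d :: e :: [] => (((a * b) * c) * d) * e
  | _ => 0

private lemma one_le_len {α : Type*} (t : BTree α) : 1 ≤ t.leaves.length := by
  induction t with
  | leaf a => simp [BTree.leaves]
  | node l r ihl ihr => simp only [BTree.leaves, List.length_append]; omega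


include shift

private lemma brk0 (a b c d e : A) :
    a * (b * (c * (d * e))) = (((a * b) * c) * d) * e := by
    calc a * (b * (c * (d * e)))
      _ = a * (((d * e) * b) * c) := by rw [← shift (d * e) b c]
      _ = (c * a) * ((d * e) * b) := by rw [← shift c a ((d * e) * b)]
      _ = (b * (c * a)) * (d * e) := by rw [← shift b (c * a) (d * e)]
      _ = (e * (b * (c * a))) * d := by rw [← shift e (b * (c * a)) d]
      _ = (((c * a) * e) * b) * d := by rw [← shift (c * a) e b]
      _ = ((a * (e * c)) * b) * d := by rw [shift c a e]
      _ = b * (d * (a * (e * c))) := by rw [shift (a * (e * c)) b d]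
      _ = b * (((e * c) * d) * a) := by rw [← shift (e * c) d a]
      _ = (a * b) * ((e * c) * d) := by rw [← shift a b ((e * c) * d)]
      _ = (d * (a * b)) * (e * c) := by rw [← shift d (a * b) (e * c)]
      _ = (c * (d * (a * b))) * e := by rw [← shift c (d * (a * b)) e]
      _ = (((a * b) * c) * d) * e := by rw [← shift (a * b) c d]

private lemma brk1 (a b c d e : A) :
    a * (b * ((c * d) * e)) = (((a * b) * c) * d) * e := by
    calc a * (b * ((c * d) * e))
      _ = a * (b * (d * (e * c))) := by rw [shift c d e]
      _ = a * (((e * c) * b) * d) := by rw [← shift (e * c) b d]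
      _ = a * ((c * (b * e)) * d) := by rw [shift e c b]
      _ = (d * a) * (c * (b * e)) := by rw [← shift d a (c * (b * e))]
      _ = ((b * e) * (d * a)) * c := by rw [← shift (b * e) (d * a) c]
      _ = (e * ((d * a) * b)) * c := by rw [shift b e (d * a)]
      _ = (e * (a * (b * d))) * c := by rw [shift d a b]
      _ = (((b * d) * e) * a) * c := by rw [← shift (b * d) e a]
      _ = a * (c * ((b * d) * e)) := by rw [shift ((b * d) * e) a c]
      _ = a * ((e * c) * (b * d)) := by rw [← shift e c (b * d)]
      _ = ((b * d) * a) * (e * c) := by rw [← shift (b * d) a (e * c)]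
      _ = (d * (a * b)) * (e * c) := by rw [shift b d a]
      _ = (c * (d * (a * b))) * e := by rw [← shift c (d * (a * b)) e]
      _ = (((a * b) * c) * d) * e := by rw [← shift (a * b) c d]

private lemma brk2 (a b c d e : A) :
    a * ((b * c) * (d * e)) = (((a * b) * c) * d) * e := by
    calc a * ((b * c) * (d * e))
      _ = a * ((e * (b * c)) * d) := by rw [← shift e (b * c) d]
      _ = a * (((c * e) * b) * d) := by rw [← shift c e b]
      _ = (d * a) * ((c * e) * b) := by rw [← shift d a ((c * e) * b)]
      _ = (b * (d * a)) * (c * e) := by rw [← shift b (d * a) (c * e)]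
      _ = ((a * b) * d) * (c * e) := by rw [← shift a b d]
      _ = d * ((c * e) * (a * b)) := by rw [shift (a * b) d (c * e)]
      _ = d * (e * ((a * b) * c)) := by rw [shift c e (a * b)]
      _ = (((a * b) * c) * d) * e := by rw [← shift ((a * b) * c) d e]

private lemma brk3 (a b c d e : A) :
    a * ((b * (c * d)) * e) = (((a * b) * c) * d) * e := by
    calc a * ((b * (c * d)) * e)
      _ = a * ((c * d) * (e * b)) := by rw [shift b (c * d) e]
      _ = a * (d * ((e * b) * c)) := by rw [shift c d (e * b)]
      _ = (((e * b) * c) * a) * d := by rw [← shift ((e * b) * c) a d]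
      _ = (c * (a * (e * b))) * d := by rw [shift (e * b) c a]
      _ = (c * ((b * a) * e)) * d := by rw [← shift b a e]
      _ = ((e * c) * (b * a)) * d := by rw [← shift e c (b * a)]
      _ = ((a * (e * c)) * b) * d := by rw [← shift a (e * c) b]
      _ = b * (d * (a * (e * c))) := by rw [shift (a * (e * c)) b d]
      _ = b * (((e * c) * d) * a) := by rw [← shift (e * c) d a]
      _ = (a * b) * ((e * c) * d) := by rw [← shift a b ((e * c) * d)]
      _ = (d * (a * b)) * (e * c) := by rw [← shift d (a * b) (e * c)]
      _ = (c * (d * (a * b))) * e := by rw [← shift c (d * (a * b)) e]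
      _ = (((a * b) * c) * d) * e := by rw [← shift (a * b) c d]

private lemma brk4 (a b c d e : A) :
    a * (((b * c) * d) * e) = (((a * b) * c) * d) * e := by
    calc a * (((b * c) * d) * e)
      _ = a * ((c * (d * b)) * e) := by rw [shift b c d]
      _ = (e * a) * (c * (d * b)) := by rw [← shift e a (c * (d * b))]
      _ = ((d * b) * (e * a)) * c := by rw [← shift (d * b) (e * a) c]
      _ = ((a * (d * b)) * e) * c := by rw [← shift a (d * b) e]
      _ = (((b * a) * d) * e) * c := by rw [← shift b a d]
      _ = (d * (e * (b * a))) * c := by rw [shift (b * a) d e]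
      _ = (e * (b * a)) * (c * d) := by rw [shift d (e * (b * a)) c]
      _ = (b * a) * ((c * d) * e) := by rw [shift e (b * a) (c * d)]
      _ = (b * a) * (d * (e * c)) := by rw [shift c d e]
      _ = a * ((d * (e * c)) * b) := by rw [shift b a (d * (e * c))]
      _ = a * ((e * c) * (b * d)) := by rw [shift d (e * c) b]
      _ = ((b * d) * a) * (e * c) := by rw [← shift (b * d) a (e * c)]
      _ = (d * (a * b)) * (e * c) := by rw [shift b d a]
      _ = (c * (d * (a * b))) * e := by rw [← shift c (d * (a * b)) e]
      _ = (((a * b) * c) * d) * e := by rw [← shift (a * b) c d]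

private lemma brk5 (a b c d e : A) :
    (a * b) * (c * (d * e)) = (((a * b) * c) * d) * e := by
    calc (a * b) * (c * (d * e))
      _ = (a * b) * ((e * c) * d) := by rw [← shift e c d]
      _ = (d * (a * b)) * (e * c) := by rw [← shift d (a * b) (e * c)]
      _ = (c * (d * (a * b))) * e := by rw [← shift c (d * (a * b)) e]
      _ = (((a * b) * c) * d) * e := by rw [← shift (a * b) c d]

private lemma brk6 (a b c d e : A) :
    (a * b) * ((c * d) * e) = (((a * b) * c) * d) * e := by
    calc (a * b) * ((c * d) * e)
      _ = b * (((c * d) * e) * a) := by rw [shift a b ((c * d) * e)]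
      _ = b * (e * (a * (c * d))) := by rw [shift (c * d) e a]
      _ = b * (e * ((d * a) * c)) := by rw [← shift d a c]
      _ = b * ((c * e) * (d * a)) := by rw [← shift c e (d * a)]
      _ = ((d * a) * b) * (c * e) := by rw [← shift (d * a) b (c * e)]
      _ = (a * (b * d)) * (c * e) := by rw [shift d a b]
      _ = (b * d) * ((c * e) * a) := by rw [shift a (b * d) (c * e)]
      _ = (b * d) * (e * (a * c)) := by rw [shift c e a]
      _ = ((a * c) * (b * d)) * e := by rw [← shift (a * c) (b * d) e]
      _ = (c * ((b * d) * a)) * e := by rw [shift a c (b * d)]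
      _ = (c * (d * (a * b))) * e := by rw [shift b d a]
      _ = (((a * b) * c) * d) * e := by rw [← shift (a * b) c d]

private lemma brk7 (a b c d e : A) :
    (a * (b * c)) * (d * e) = (((a * b) * c) * d) * e := by
    calc (a * (b * c)) * (d * e)
      _ = ((c * a) * b) * (d * e) := by rw [← shift c a b]
      _ = b * ((d * e) * (c * a)) := by rw [shift (c * a) b (d * e)]
      _ = b * (e * ((c * a) * d)) := by rw [shift d e (c * a)]
      _ = b * (e * (a * (d * c))) := by rw [shift c a d]
      _ = ((a * (d * c)) * b) * e := by rw [← shift (a * (d * c)) b e]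
      _ = ((d * c) * (b * a)) * e := by rw [shift a (d * c) b]
      _ = (c * ((b * a) * d)) * e := by rw [shift d c (b * a)]
      _ = ((b * a) * d) * (e * c) := by rw [shift c ((b * a) * d) e]
      _ = d * ((e * c) * (b * a)) := by rw [shift (b * a) d (e * c)]
      _ = d * ((a * (e * c)) * b) := by rw [← shift a (e * c) b]
      _ = d * (((c * a) * e) * b) := by rw [← shift c a e]
      _ = d * (e * (b * (c * a))) := by rw [shift (c * a) e b]
      _ = d * (e * ((a * b) * c)) := by rw [← shift a b c]
      _ = (((a * b) * c) * d) * e := by rw [← shift ((a * b) * c) d e]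

private lemma brk8 (a b c d e : A) :
    ((a * b) * c) * (d * e) = (((a * b) * c) * d) * e := by
    calc ((a * b) * c) * (d * e)
      _ = (b * (c * a)) * (d * e) := by rw [shift a b c]
      _ = (e * (b * (c * a))) * d := by rw [← shift e (b * (c * a)) d]
      _ = (((c * a) * e) * b) * d := by rw [← shift (c * a) e b]
      _ = ((a * (e * c)) * b) * d := by rw [shift c a e]
      _ = b * (d * (a * (e * c))) := by rw [shift (a * (e * c)) b d]
      _ = b * (((e * c) * d) * a) := by rw [← shift (e * c) d a]
      _ = (a * b) * ((e * c) * d) := by rw [← shift a b ((e * c) * d)]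
      _ = (d * (a * b)) * (e * c) := by rw [← shift d (a * b) (e * c)]
      _ = (c * (d * (a * b))) * e := by rw [← shift c (d * (a * b)) e]
      _ = (((a * b) * c) * d) * e := by rw [← shift (a * b) c d]

private lemma brk9 (a b c d e : A) :
    (a * (b * (c * d))) * e = (((a * b) * c) * d) * e := by
    calc (a * (b * (c * d))) * e
      _ = (a * ((d * b) * c)) * e := by rw [← shift d b c]
      _ = ((c * a) * (d * b)) * e := by rw [← shift c a (d * b)]
      _ = ((b * (c * a)) * d) * e := by rw [← shift b (c * a) d]
      _ = (((a * b) * c) * d) * e := by rw [← shift a b c]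

private lemma brk10 (a b c d e : A) :
    (a * ((b * c) * d)) * e = (((a * b) * c) * d) * e := by
    calc (a * ((b * c) * d)) * e
      _ = ((d * a) * (b * c)) * e := by rw [← shift d a (b * c)]
      _ = ((c * (d * a)) * b) * e := by rw [← shift c (d * a) b]
      _ = (((a * c) * d) * b) * e := by rw [← shift a c d]
      _ = b * (e * ((a * c) * d)) := by rw [shift ((a * c) * d) b e]
      _ = b * ((d * e) * (a * c)) := by rw [← shift d e (a * c)]
      _ = b * ((c * (d * e)) * a) := by rw [← shift c (d * e) a]
      _ = b * (((e * c) * d) * a) := by rw [← shift e c d]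
      _ = (a * b) * ((e * c) * d) := by rw [← shift a b ((e * c) * d)]
      _ = (d * (a * b)) * (e * c) := by rw [← shift d (a * b) (e * c)]
      _ = (c * (d * (a * b))) * e := by rw [← shift c (d * (a * b)) e]
      _ = (((a * b) * c) * d) * e := by rw [← shift (a * b) c d]

private lemma brk11 (a b c d e : A) :
    ((a * b) * (c * d)) * e = (((a * b) * c) * d) * e := by
    calc ((a * b) * (c * d)) * e
      _ = ((d * (a * b)) * c) * e := by rw [← shift d (a * b) c]
      _ = c * (e * (d * (a * b))) := by rw [shift (d * (a * b)) c e]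
      _ = c * (((a * b) * e) * d) := by rw [← shift (a * b) e d]
      _ = c * ((b * (e * a)) * d) := by rw [shift a b e]
      _ = c * ((e * a) * (d * b)) := by rw [shift b (e * a) d]
      _ = ((d * b) * c) * (e * a) := by rw [← shift (d * b) c (e * a)]
      _ = (a * ((d * b) * c)) * e := by rw [← shift a ((d * b) * c) e]
      _ = ((c * a) * (d * b)) * e := by rw [← shift c a (d * b)]
      _ = ((b * (c * a)) * d) * e := by rw [← shift b (c * a) d]
      _ = (((a * b) * c) * d) * e := by rw [← shift a b c]

private lemma brk12 (a b c d e : A) :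
    ((a * (b * c)) * d) * e = (((a * b) * c) * d) * e := by
    calc ((a * (b * c)) * d) * e
      _ = ((b * c) * (d * a)) * e := by rw [shift a (b * c) d]
      _ = (d * a) * (e * (b * c)) := by rw [shift (b * c) (d * a) e]
      _ = (d * a) * ((c * e) * b) := by rw [← shift c e b]
      _ = (b * (d * a)) * (c * e) := by rw [← shift b (d * a) (c * e)]
      _ = ((a * b) * d) * (c * e) := by rw [← shift a b d]
      _ = d * ((c * e) * (a * b)) := by rw [shift (a * b) d (c * e)]
      _ = d * (e * ((a * b) * c)) := by rw [shift c e (a * b)]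
      _ = (((a * b) * c) * d) * e := by rw [← shift ((a * b) * c) d e]

private lemma brk13 (a b c d e : A) :
    (((a * b) * c) * d) * e = (((a * b) * c) * d) * e := rfl

private lemma swp0 (a b c d e : A) :
    (((a * b) * c) * d) * e = (((b * a) * c) * d) * e := by
    calc (((a * b) * c) * d) * e
      _ = d * (e * ((a * b) * c)) := by rw [shift ((a * b) * c) d e]
      _ = d * ((c * e) * (a * b)) := by rw [← shift c e (a * b)]
      _ = d * ((b * (c * e)) * a) := by rw [← shift b (c * e) a]
      _ = (a * d) * (b * (c * e)) := by rw [← shift a d (b * (c * e))]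
      _ = (a * d) * ((e * b) * c) := by rw [← shift e b c]
      _ = (c * (a * d)) * (e * b) := by rw [← shift c (a * d) (e * b)]
      _ = ((d * c) * a) * (e * b) := by rw [← shift d c a]
      _ = a * ((e * b) * (d * c)) := by rw [shift (d * c) a (e * b)]
      _ = a * ((c * (e * b)) * d) := by rw [← shift c (e * b) d]
      _ = a * (((b * c) * e) * d) := by rw [← shift b c e]
      _ = a * (e * (d * (b * c))) := by rw [shift (b * c) e d]
      _ = ((d * (b * c)) * a) * e := by rw [← shift (d * (b * c)) a e]
      _ = ((b * c) * (a * d)) * e := by rw [shift d (b * c) a]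
      _ = (c * ((a * d) * b)) * e := by rw [shift b c (a * d)]
      _ = (c * (d * (b * a))) * e := by rw [shift a d b]
      _ = (((b * a) * c) * d) * e := by rw [← shift (b * a) c d]

private lemma swp1 (a b c d e : A) :
    (((a * b) * c) * d) * e = (((a * c) * b) * d) * e := by
    calc (((a * b) * c) * d) * e
      _ = (c * (d * (a * b))) * e := by rw [shift (a * b) c d]
      _ = (c * ((b * d) * a)) * e := by rw [← shift b d a]
      _ = ((a * c) * (b * d)) * e := by rw [← shift a c (b * d)]
      _ = ((d * (a * c)) * b) * e := by rw [← shift d (a * c) b]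
      _ = b * (e * (d * (a * c))) := by rw [shift (d * (a * c)) b e]
      _ = b * (((a * c) * e) * d) := by rw [← shift (a * c) e d]
      _ = b * ((c * (e * a)) * d) := by rw [shift a c e]
      _ = b * ((e * a) * (d * c)) := by rw [shift c (e * a) d]
      _ = ((d * c) * b) * (e * a) := by rw [← shift (d * c) b (e * a)]
      _ = (a * ((d * c) * b)) * e := by rw [← shift a ((d * c) * b) e]
      _ = ((b * a) * (d * c)) * e := by rw [← shift b a (d * c)]
      _ = ((c * (b * a)) * d) * e := by rw [← shift c (b * a) d]
      _ = (((a * c) * b) * d) * e := by rw [← shift a c b]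

private lemma swp2 (a b c d e : A) :
    (((a * b) * c) * d) * e = (((a * b) * d) * c) * e := by
    calc (((a * b) * c) * d) * e
      _ = d * (e * ((a * b) * c)) := by rw [shift ((a * b) * c) d e]
      _ = d * ((c * e) * (a * b)) := by rw [← shift c e (a * b)]
      _ = ((a * b) * d) * (c * e) := by rw [← shift (a * b) d (c * e)]
      _ = (e * ((a * b) * d)) * c := by rw [← shift e ((a * b) * d) c]
      _ = (e * (b * (d * a))) * c := by rw [shift a b d]
      _ = (((d * a) * e) * b) * c := by rw [← shift (d * a) e b]
      _ = b * (c * ((d * a) * e)) := by rw [shift ((d * a) * e) b c]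
      _ = b * (c * (a * (e * d))) := by rw [shift d a e]
      _ = b * (((e * d) * c) * a) := by rw [← shift (e * d) c a]
      _ = (a * b) * ((e * d) * c) := by rw [← shift a b ((e * d) * c)]
      _ = (c * (a * b)) * (e * d) := by rw [← shift c (a * b) (e * d)]
      _ = (d * (c * (a * b))) * e := by rw [← shift d (c * (a * b)) e]
      _ = (((a * b) * d) * c) * e := by rw [← shift (a * b) d c]

private lemma swp3 (a b c d e : A) :
    (((a * b) * c) * d) * e = (((a * b) * c) * e) * d := by
    calc (((a * b) * c) * d) * e
      _ = d * (e * ((a * b) * c)) := by rw [shift ((a * b) * c) d e]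
      _ = d * (e * (b * (c * a))) := by rw [shift a b c]
      _ = d * (((c * a) * e) * b) := by rw [← shift (c * a) e b]
      _ = (b * d) * ((c * a) * e) := by rw [← shift b d ((c * a) * e)]
      _ = (e * (b * d)) * (c * a) := by rw [← shift e (b * d) (c * a)]
      _ = (a * (e * (b * d))) * c := by rw [← shift a (e * (b * d)) c]
      _ = (((b * d) * a) * e) * c := by rw [← shift (b * d) a e]
      _ = e * (c * ((b * d) * a)) := by rw [shift ((b * d) * a) e c]
      _ = e * ((a * c) * (b * d)) := by rw [← shift a c (b * d)]
      _ = e * ((d * (a * c)) * b) := by rw [← shift d (a * c) b]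
      _ = (b * e) * (d * (a * c)) := by rw [← shift b e (d * (a * c))]
      _ = ((a * c) * (b * e)) * d := by rw [← shift (a * c) (b * e) d]
      _ = (c * ((b * e) * a)) * d := by rw [shift a c (b * e)]
      _ = (c * (e * (a * b))) * d := by rw [shift b e a]
      _ = (((a * b) * c) * e) * d := by rw [← shift (a * b) c e]

private lemma eval5 (t : BTree A) (h : t.leaves.length = 5) : t.eval = LL t.leaves := by
  rcases t with x1 | ⟨s1, s2⟩
  · simp [BTree.leaves] at h
  · rcases s1 with x2 | ⟨s3, s4⟩
    · rcases s2 with x7 | ⟨s173, s174⟩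
      · simp [BTree.leaves] at h
      · rcases s173 with x8 | ⟨s175, s176⟩
        · rcases s174 with x12 | ⟨s211, s212⟩
          · simp [BTree.leaves] at h
          · rcases s211 with x13 | ⟨s213, s214⟩
            · rcases s212 with x16 | ⟨s223, s224⟩
              · simp [BTree.leaves] at h
              · rcases s223 with x17 | ⟨s225, s226⟩
                · rcases s224 with x19 | ⟨s229, s230⟩
                  · simp only [BTree.eval, BTree.leaves, List.cons_append, List.nil_append, LL]
                    exact brk0 shift x2 x8 x13 x17 x19
                  · have hs229 := one_le_len s229
                    have hs230 := one_le_len s230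
                    simp only [BTree.leaves, List.length_append, List.length_cons, List.length_nil] at h
                    omega
                · have hs225 := one_le_len s225
                  have hs226 := one_le_len s226
                  have hs224 := one_le_len s224
                  simp only [BTree.leaves, List.length_append, List.length_cons, List.length_nil] at h
                  omega
            · rcases s213 with x14 | ⟨s231, s232⟩
              · rcases s214 with x16 | ⟨s239, s240⟩
                · rcases s212 with x18 | ⟨s243, s244⟩
                  · simp only [BTree.eval, BTree.leaves, List.cons_append, List.nil_append, LL]
                    exact brk1 shift x2 x8 x14 x16 x18
                  · have hs243 := one_le_len s243
                    have hs244 := one_le_len s244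
                    simp only [BTree.leaves, List.length_append, List.length_cons, List.length_nil] at h
                    omega
                · have hs239 := one_le_len s239
                  have hs240 := one_le_len s240
                  have hs212 := one_le_len s212
                  simp only [BTree.leaves, List.length_append, List.length_cons, List.length_nil] at h
                  omega
              · have hs231 := one_le_len s231
                have hs232 := one_le_len s232
                have hs214 := one_le_len s214
                have hs212 := one_le_len s212
                simp only [BTree.leaves, List.length_append, List.length_cons, List.length_nil] at h
                omega
        · rcases s175 with x9 | ⟨s245, s246⟩
          · rcases s176 with x12 | ⟨s279, s280⟩
            · rcases s174 with x15 | ⟨s289, s290⟩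
              · simp [BTree.leaves] at h
              · rcases s289 with x16 | ⟨s291, s292⟩
                · rcases s290 with x18 | ⟨s295, s296⟩
                  · simp only [BTree.eval, BTree.leaves, List.cons_append, List.nil_append, LL]
                    exact brk2 shift x2 x9 x12 x16 x18
                  · have hs295 := one_le_len s295
                    have hs296 := one_le_len s296
                    simp only [BTree.leaves, List.length_append, List.length_cons, List.length_nil] at h
                    omega
                · have hs291 := one_le_len s291
                  have hs292 := one_le_len s292
                  have hs290 := one_le_len s290
                  simp only [BTree.leaves, List.length_append, List.length_cons, List.length_nil] at h
                  omega
            · rcases s279 with x13 | ⟨s297, s298⟩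
              · rcases s280 with x15 | ⟨s305, s306⟩
                · rcases s174 with x17 | ⟨s309, s310⟩
                  · simp only [BTree.eval, BTree.leaves, List.cons_append, List.nil_append, LL]
                    exact brk3 shift x2 x9 x13 x15 x17
                  · have hs309 := one_le_len s309
                    have hs310 := one_le_len s310
                    simp only [BTree.leaves, List.length_append, List.length_cons, List.length_nil] at h
                    omega
                · have hs305 := one_le_len s305
                  have hs306 := one_le_len s306
                  have hs174 := one_le_len s174
                  simp only [BTree.leaves, List.length_append, List.length_cons, List.length_nil] at h
                  omega
              · have hs297 := one_le_len s297
                have hs298 := one_le_len s298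
                have hs280 := one_le_len s280
                have hs174 := one_le_len s174
                simp only [BTree.leaves, List.length_append, List.length_cons, List.length_nil] at h
                omega
          · rcases s245 with x10 | ⟨s311, s312⟩
            · rcases s246 with x12 | ⟨s327, s328⟩
              · rcases s176 with x14 | ⟨s335, s336⟩
                · rcases s174 with x16 | ⟨s339, s340⟩
                  · simp only [BTree.eval, BTree.leaves, List.cons_append, List.nil_append, LL]
                    exact brk4 shift x2 x10 x12 x14 x16
                  · have hs339 := one_le_len s339
                    have hs340 := one_le_len s340
                    simp only [BTree.leaves, List.length_append, List.length_cons, List.length_nil] at h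
                    omega
                · have hs335 := one_le_len s335
                  have hs336 := one_le_len s336
                  have hs174 := one_le_len s174
                  simp only [BTree.leaves, List.length_append, List.length_cons, List.length_nil] at h
                  omega
              · have hs327 := one_le_len s327
                have hs328 := one_le_len s328
                have hs176 := one_le_len s176
                have hs174 := one_le_len s174
                simp only [BTree.leaves, List.length_append, List.length_cons, List.length_nil] at h
                omega
            · have hs311 := one_le_len s311
              have hs312 := one_le_len s312
              have hs246 := one_le_len s246
              have hs176 := one_le_len s176
              have hs174 := one_le_len s174
              simp only [BTree.leaves, List.length_append, List.length_cons, List.length_nil] at h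
              omega
    · rcases s3 with x3 | ⟨s341, s342⟩
      · rcases s4 with x7 | ⟨s509, s510⟩
        · rcases s2 with x11 | ⟨s545, s546⟩
          · simp [BTree.leaves] at h
          · rcases s545 with x12 | ⟨s547, s548⟩
            · rcases s546 with x15 | ⟨s557, s558⟩
              · simp [BTree.leaves] at h
              · rcases s557 with x16 | ⟨s559, s560⟩
                · rcases s558 with x18 | ⟨s563, s564⟩
                  · simp only [BTree.eval, BTree.leaves, List.cons_append, List.nil_append, LL]
                    exact brk5 shift x3 x7 x12 x16 x18
                  · have hs563 := one_le_len s563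
                    have hs564 := one_le_len s564
                    simp only [BTree.leaves, List.length_append, List.length_cons, List.length_nil] at h
                    omega
                · have hs559 := one_le_len s559
                  have hs560 := one_le_len s560
                  have hs558 := one_le_len s558
                  simp only [BTree.leaves, List.length_append, List.length_cons, List.length_nil] at h
                  omega
            · rcases s547 with x13 | ⟨s565, s566⟩
              · rcases s548 with x15 | ⟨s573, s574⟩
                · rcases s546 with x17 | ⟨s577, s578⟩
                  · simp only [BTree.eval, BTree.leaves, List.cons_append, List.nil_append, LL]
                    exact brk6 shift x3 x7 x13 x15 x17
                  · have hs577 := one_le_len s577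
                    have hs578 := one_le_len s578
                    simp only [BTree.leaves, List.length_append, List.length_cons, List.length_nil] at h
                    omega
                · have hs573 := one_le_len s573
                  have hs574 := one_le_len s574
                  have hs546 := one_le_len s546
                  simp only [BTree.leaves, List.length_append, List.length_cons, List.length_nil] at h
                  omega
              · have hs565 := one_le_len s565
                have hs566 := one_le_len s566
                have hs548 := one_le_len s548
                have hs546 := one_le_len s546
                simp only [BTree.leaves, List.length_append, List.length_cons, List.length_nil] at h
                omega
        · rcases s509 with x8 | ⟨s579, s580⟩
          · rcases s510 with x11 | ⟨s613, s614⟩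
            · rcases s2 with x14 | ⟨s623, s624⟩
              · simp [BTree.leaves] at h
              · rcases s623 with x15 | ⟨s625, s626⟩
                · rcases s624 with x17 | ⟨s629, s630⟩
                  · simp only [BTree.eval, BTree.leaves, List.cons_append, List.nil_append, LL]
                    exact brk7 shift x3 x8 x11 x15 x17
                  · have hs629 := one_le_len s629
                    have hs630 := one_le_len s630
                    simp only [BTree.leaves, List.length_append, List.length_cons, List.length_nil] at h
                    omega
                · have hs625 := one_le_len s625
                  have hs626 := one_le_len s626
                  have hs624 := one_le_len s624
                  simp only [BTree.leaves, List.length_append, List.length_cons, List.length_nil] at h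
                  omega
            · rcases s613 with x12 | ⟨s631, s632⟩
              · rcases s614 with x14 | ⟨s639, s640⟩
                · rcases s2 with x16 | ⟨s643, s644⟩
                  · simp only [BTree.eval, BTree.leaves, List.cons_append, List.nil_append, LL]
                    exact brk9 shift x3 x8 x12 x14 x16
                  · have hs643 := one_le_len s643
                    have hs644 := one_le_len s644
                    simp only [BTree.leaves, List.length_append, List.length_cons, List.length_nil] at h
                    omega
                · have hs639 := one_le_len s639
                  have hs640 := one_le_len s640
                  have hs2 := one_le_len s2
                  simp only [BTree.leaves, List.length_append, List.length_cons, List.length_nil] at h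
                  omega
              · have hs631 := one_le_len s631
                have hs632 := one_le_len s632
                have hs614 := one_le_len s614
                have hs2 := one_le_len s2
                simp only [BTree.leaves, List.length_append, List.length_cons, List.length_nil] at h
                omega
          · rcases s579 with x9 | ⟨s645, s646⟩
            · rcases s580 with x11 | ⟨s661, s662⟩
              · rcases s510 with x13 | ⟨s669, s670⟩
                · rcases s2 with x15 | ⟨s673, s674⟩
                  · simp only [BTree.eval, BTree.leaves, List.cons_append, List.nil_append, LL]
                    exact brk10 shift x3 x9 x11 x13 x15
                  · have hs673 := one_le_len s673
                    have hs674 := one_le_len s674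
                    simp only [BTree.leaves, List.length_append, List.length_cons, List.length_nil] at h
                    omega
                · have hs669 := one_le_len s669
                  have hs670 := one_le_len s670
                  have hs2 := one_le_len s2
                  simp only [BTree.leaves, List.length_append, List.length_cons, List.length_nil] at h
                  omega
              · have hs661 := one_le_len s661
                have hs662 := one_le_len s662
                have hs510 := one_le_len s510
                have hs2 := one_le_len s2
                simp only [BTree.leaves, List.length_append, List.length_cons, List.length_nil] at h
                omega
            · have hs645 := one_le_len s645
              have hs646 := one_le_len s646
              have hs580 := one_le_len s580
              have hs510 := one_le_len s510
              have hs2 := one_le_len s2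
              simp only [BTree.leaves, List.length_append, List.length_cons, List.length_nil] at h
              omega
      · rcases s341 with x4 | ⟨s675, s676⟩
        · rcases s342 with x7 | ⟨s773, s774⟩
          · rcases s4 with x10 | ⟨s807, s808⟩
            · rcases s2 with x13 | ⟨s817, s818⟩
              · simp [BTree.leaves] at h
              · rcases s817 with x14 | ⟨s819, s820⟩
                · rcases s818 with x16 | ⟨s823, s824⟩
                  · simp only [BTree.eval, BTree.leaves, List.cons_append, List.nil_append, LL]
                    exact brk8 shift x4 x7 x10 x14 x16
                  · have hs823 := one_le_len s823
                    have hs824 := one_le_len s824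
                    simp only [BTree.leaves, List.length_append, List.length_cons, List.length_nil] at h
                    omega
                · have hs819 := one_le_len s819
                  have hs820 := one_le_len s820
                  have hs818 := one_le_len s818
                  simp only [BTree.leaves, List.length_append, List.length_cons, List.length_nil] at h
                  omega
            · rcases s807 with x11 | ⟨s825, s826⟩
              · rcases s808 with x13 | ⟨s833, s834⟩
                · rcases s2 with x15 | ⟨s837, s838⟩
                  · simp only [BTree.eval, BTree.leaves, List.cons_append, List.nil_append, LL]
                    exact brk11 shift x4 x7 x11 x13 x15
                  · have hs837 := one_le_len s837
                    have hs838 := one_le_len s838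
                    simp only [BTree.leaves, List.length_append, List.length_cons, List.length_nil] at h
                    omega
                · have hs833 := one_le_len s833
                  have hs834 := one_le_len s834
                  have hs2 := one_le_len s2
                  simp only [BTree.leaves, List.length_append, List.length_cons, List.length_nil] at h
                  omega
              · have hs825 := one_le_len s825
                have hs826 := one_le_len s826
                have hs808 := one_le_len s808
                have hs2 := one_le_len s2
                simp only [BTree.leaves, List.length_append, List.length_cons, List.length_nil] at h
                omega
          · rcases s773 with x8 | ⟨s839, s840⟩
            · rcases s774 with x10 | ⟨s855, s856⟩
              · rcases s4 with x12 | ⟨s863, s864⟩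
                · rcases s2 with x14 | ⟨s867, s868⟩
                  · simp only [BTree.eval, BTree.leaves, List.cons_append, List.nil_append, LL]
                    exact brk12 shift x4 x8 x10 x12 x14
                  · have hs867 := one_le_len s867
                    have hs868 := one_le_len s868
                    simp only [BTree.leaves, List.length_append, List.length_cons, List.length_nil] at h
                    omega
                · have hs863 := one_le_len s863
                  have hs864 := one_le_len s864
                  have hs2 := one_le_len s2
                  simp only [BTree.leaves, List.length_append, List.length_cons, List.length_nil] at h
                  omega
              · have hs855 := one_le_len s855
                have hs856 := one_le_len s856
                have hs4 := one_le_len s4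
                have hs2 := one_le_len s2
                simp only [BTree.leaves, List.length_append, List.length_cons, List.length_nil] at h
                omega
            · have hs839 := one_le_len s839
              have hs840 := one_le_len s840
              have hs774 := one_le_len s774
              have hs4 := one_le_len s4
              have hs2 := one_le_len s2
              simp only [BTree.leaves, List.length_append, List.length_cons, List.length_nil] at h
              omega
        · rcases s675 with x5 | ⟨s869, s870⟩
          · rcases s676 with x7 | ⟨s901, s902⟩
            · rcases s342 with x9 | ⟨s917, s918⟩
              · rcases s4 with x11 | ⟨s925, s926⟩
                · rcases s2 with x13 | ⟨s929, s930⟩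
                  · simp only [BTree.eval, BTree.leaves, List.cons_append, List.nil_append, LL]
                  · have hs929 := one_le_len s929
                    have hs930 := one_le_len s930
                    simp only [BTree.leaves, List.length_append, List.length_cons, List.length_nil] at h
                    omega
                · have hs925 := one_le_len s925
                  have hs926 := one_le_len s926
                  have hs2 := one_le_len s2
                  simp only [BTree.leaves, List.length_append, List.length_cons, List.length_nil] at h
                  omega
              · have hs917 := one_le_len s917
                have hs918 := one_le_len s918
                have hs4 := one_le_len s4
                have hs2 := one_le_len s2
                simp only [BTree.leaves, List.length_append, List.length_cons, List.length_nil] at h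
                omega
            · have hs901 := one_le_len s901
              have hs902 := one_le_len s902
              have hs342 := one_le_len s342
              have hs4 := one_le_len s4
              have hs2 := one_le_len s2
              simp only [BTree.leaves, List.length_append, List.length_cons, List.length_nil] at h
              omega
          · have hs869 := one_le_len s869
            have hs870 := one_le_len s870
            have hs676 := one_le_len s676
            have hs342 := one_le_len s342
            have hs4 := one_le_len s4
            have hs2 := one_le_len s2
            simp only [BTree.leaves, List.length_append, List.length_cons, List.length_nil] at h
            omega

private lemma LL_perm : ∀ (p l₁ l₂ : List A), l₁.Perm l₂ → (p ++ l₁).length = 5 →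
    LL (p ++ l₁) = LL (p ++ l₂) := by
  intro p l₁ l₂ hp
  induction hp generalizing p with
  | nil => intro _; rfl
  | cons x h ih =>
      intro hl
      have h2 := ih (p ++ [x]) (by simpa [List.append_assoc] using hl)
      simpa [List.append_assoc] using h2
  | swap x y l =>
      intro hl
      rcases p with _ | ⟨a, _ | ⟨b, _ | ⟨c, _ | ⟨d, p⟩⟩⟩⟩ <;>
        rcases l with _ | ⟨m, _ | ⟨n, _ | ⟨o, _ | ⟨q, l⟩⟩⟩⟩ <;>
        simp only [List.nil_append, List.cons_append, List.append_nil, List.length_cons,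
          List.length_append, List.length_nil] at hl ⊢ <;>
        first
          | omega
          | (simp only [LL]
             first
               | exact swp0 shift _ _ _ _ _
               | exact swp1 shift _ _ _ _ _
               | exact swp2 shift _ _ _ _ _
               | exact swp3 shift _ _ _ _ _)
  | trans h1 h2 ih1 ih2 =>
      intro hl
      have e1 := h1.length_eq
      rw [ih1 p hl, ih2 p (by simp only [List.length_append] at hl ⊢; omega)]

end Aux

theorem stmt_8 {A : Type*} [NonUnitalNonAssocRing A]
    (shift : ∀ x y z : A, (x * y) * z = y * (z * x))
    (t₁ t₂ : BTree A) (h5 : t₁.leaves.length = 5)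
    (hperm : List.Perm t₁.leaves t₂.leaves) :
    t₁.eval = t₂.eval := by
  have h5' : t₂.leaves.length = 5 := by rw [← hperm.length_eq]; exact h5
  rw [eval5 shift t₁ h5, eval5 shift t₂ h5']
  simpa using LL_perm shift [] t₁.leaves t₂.leaves hperm (by simpa using h5)
end

section
/- In a cyclic associative algebra, any product of 4 elements is independent of the bracketing and the order of the factors. -/
def rprod {A : Type*} [NonUnitalNonAssocRing A] : List A → A
  | [] => 0
  | [a] => a
  | a :: b :: l => a * rprod (b :: l)

lemma BTree.leaves_ne_nil {α : Type*} : ∀ t : BTree α, t.leaves ≠ []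
  | .leaf a => by simp [BTree.leaves]
  | .node l r => by simp [BTree.leaves, BTree.leaves_ne_nil l]

lemma rprod_append {A : Type*} [NonUnitalNonAssocRing A]
    (assoc : ∀ x y z : A, (x * y) * z = x * (y * z)) :
    ∀ l₁ l₂ : List A, l₁ ≠ [] → l₂ ≠ [] → rprod (l₁ ++ l₂) = rprod l₁ * rprod l₂
  | [], _, h, _ => absurd rfl h
  | [a], l₂, _, h₂ => by
      cases l₂ with
      | nil => exact absurd rfl h₂
      | cons b l => simp [rprod]
  | a :: b :: l, l₂, _, h₂ => by
      have ih := rprod_append assoc (b :: l) l₂ (by simp) h₂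
      simp only [List.cons_append] at ih ⊢
      show a * rprod (b :: (l ++ l₂)) = (a * rprod (b :: l)) * rprod l₂
      rw [ih, ← assoc]

lemma eval_eq_rprod {A : Type*} [NonUnitalNonAssocRing A]
    (assoc : ∀ x y z : A, (x * y) * z = x * (y * z)) :
    ∀ t : BTree A, t.eval = rprod t.leaves
  | .leaf a => rfl
  | .node l r => by
      rw [BTree.eval, BTree.leaves,
        rprod_append assoc _ _ (BTree.leaves_ne_nil l) (BTree.leaves_ne_nil r),
        eval_eq_rprod assoc l, eval_eq_rprod assoc r]

theorem stmt_9 {A : Type*} [NonUnitalNonAssocRing A]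
    (assoc : ∀ x y z : A, (x * y) * z = x * (y * z))
    (cyc : ∀ x y z : A, (x * y) * z = y * (z * x))
    (t₁ t₂ : BTree A) (h4 : t₁.leaves.length = 4)
    (hperm : List.Perm t₁.leaves t₂.leaves) :
    t₁.eval = t₂.eval := by
  have rot3 : ∀ x y z : A, x * (y * z) = y * (z * x) := by
    intro x y z; rw [← assoc, cyc]
  have rot4 : ∀ p q r s : A, p * (q * (r * s)) = q * (r * (s * p)) := by
    intro p q r s; rw [rot3 p q (r * s), assoc]
  have rot3t : ∀ p q r s : A, p * (q * (r * s)) = p * (r * (s * q)) := by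
    intro p q r s; rw [rot3 q r s]
  rw [eval_eq_rprod assoc, eval_eq_rprod assoc]
  obtain ⟨a, b, c, d, h₁⟩ : ∃ a b c d, t₁.leaves = [a, b, c, d] := by
    rcases hl : t₁.leaves with _ | ⟨a, _ | ⟨b, _ | ⟨c, _ | ⟨d, _ | ⟨e, l⟩⟩⟩⟩⟩ <;>
      simp_all
  rw [h₁] at hperm ⊢
  have h : t₂.leaves ∈ ([a, b, c, d] : List A).permutations' :=
    List.mem_permutations'.2 hperm.symm
  simp only [List.permutations', List.permutations'Aux, List.mem_cons, List.mem_singleton,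
    List.flatMap_cons, List.flatMap_nil, List.map_cons, List.map_nil, List.append_nil,
    List.cons_append, List.nil_append, List.not_mem_nil, or_false] at h
  show a * (b * (c * d)) = rprod t₂.leaves
  rcases h with h|h|h|h|h|h|h|h|h|h|h|h|h|h|h|h|h|h|h|h|h|h|h|h
  · rw [h]; rfl
  · rw [h, rot4 a b c d, rot3t b c d a, rot3t b d a c]; rfl
  · rw [h, rot3t a b c d, rot3t a c d b, rot4 a d b c, rot4 d b c a]; rfl
  · rw [h, rot4 a b c d]; rfl
  · rw [h, rot4 a b c d, rot3t b c d a, rot4 b d a c, rot4 d a c b]; rfl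
  · rw [h, rot4 a b c d, rot4 b c d a, rot3t c d a b]; rfl
  · rw [h, rot3t a b c d, rot4 a c d b, rot3t c d b a]; rfl
  · rw [h, rot4 a b c d, rot4 b c d a, rot3t c d a b, rot3t c a b d]; rfl
  · rw [h, rot3t a b c d]; rfl
  · rw [h, rot3t a b c d, rot4 a c d b, rot3t c d b a, rot3t c b a d]; rfl
  · rw [h, rot4 a b c d, rot4 b c d a]; rfl
  · rw [h, rot3t a b c d, rot4 a c d b]; rfl
  · rw [h, rot4 a b c d, rot4 b c d a, rot3t c d a b, rot4 c a b d]; rfl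
  · rw [h, rot3t a b c d, rot4 a c d b, rot3t c d b a, rot4 c b a d]; rfl
  · rw [h, rot4 a b c d, rot3t b c d a]; rfl
  · rw [h, rot4 a b c d, rot4 b c d a, rot3t c d a b, rot4 c a b d, rot4 a b d c]; rfl
  · rw [h, rot3t a b c d, rot3t a c d b]; rfl
  · rw [h, rot4 a b c d, rot4 b c d a, rot4 c d a b]; rfl
  · rw [h, rot3t a b c d, rot4 a c d b, rot4 c d b a]; rfl
  · rw [h, rot3t a b c d, rot3t a c d b, rot4 a d b c]; rfl
  · rw [h, rot4 a b c d, rot4 b c d a, rot3t c d a b, rot4 c a b d, rot3t a b d c]; rfl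
  · rw [h, rot4 a b c d, rot3t b c d a, rot4 b d a c]; rfl
  · rw [h, rot3t a b c d, rot3t a c d b, rot4 a d b c, rot3t d b c a]; rfl
  · rw [h, rot4 a b c d, rot3t b c d a, rot4 b d a c, rot3t d a c b]; rfl
end

section
/- Let A be a shift associative algebra over a field of characteristic not 2. Then the commutator bracket [a,b] = ab - ba satisfies [u,[v,[x,[y,z]]]] = 0 for all u,v,x,y,z; that is, the associated Lie algebra is nilpotent of class at most 4. -/
theorem stmt_10 {K A : Type*} [Field K] [NonUnitalNonAssocRing A] [Module K A]
    [IsScalarTower K A A] [SMulCommClass K A A] (h2 : (2 : K) ≠ 0)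
    (shift : ∀ x y z : A, (x * y) * z = y * (z * x)) :
    ∀ u v x y z : A,
      (let c : A → A → A := fun a b => a * b - b * a
       c u (c v (c x (c y z))) = 0) := by
  intro u v x y z
  dsimp only
  have k1 : u * (v * (x * (z * y))) = u * (v * (x * (y * z))) := by
    conv_lhs => rw [← shift (x * (z * y)) u v, shift x (z * y) u, shift z y (u * x), shift y ((u * x) * z) v, shift u x z, shift x (z * u) (v * y), shift v y x, ← shift (x * v) (z * u) y, shift x v (z * u), shift z u x, ← shift (x * z) v u, shift ((x * z) * v) u y, ← shift v y (x * z), ← shift z (v * y) x, ← shift y z v, shift (y * z) v x]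

  have k2 : u * (v * ((y * z) * x)) = u * (v * (x * (y * z))) := by
    conv_lhs => rw [← shift ((y * z) * x) u v, shift y z x, shift z (x * y) u, shift (x * y) (u * z) v, ← shift y v x, ← shift x (u * z) (y * v), ← shift z x u, shift (z * x) u (y * v), shift y v (z * x), shift z x y]

  have k3 : u * (v * ((z * y) * x)) = u * (v * (x * (y * z))) := by
    conv_lhs => rw [← shift x v (z * y), ← shift y (x * v) z, ← shift z u (y * (x * v)), ← shift (x * v) (z * u) y, shift x v (z * u), shift z u x, ← shift (x * z) v u, shift ((x * z) * v) u y, ← shift v y (x * z), ← shift z (v * y) x, ← shift y z v, shift (y * z) v x]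

  have k4 : u * ((x * (y * z)) * v) = u * (v * (x * (y * z))) := by
    conv_lhs => rw [shift x (y * z) v, shift y z (v * x), ← shift ((v * x) * y) u z, shift (v * x) y u, ← shift x u v, ← shift v y (x * u), shift (v * y) (x * u) z, shift x u (z * (v * y)), ← shift y z v, shift (y * z) v x]

  have k5 : u * ((x * (z * y)) * v) = u * (v * (x * (y * z))) := by
    conv_lhs => rw [shift x (z * y) v, ← shift (v * x) u (z * y), ← shift y ((v * x) * u) z, shift v x u, ← shift (u * v) y x, shift ((u * v) * y) x z, ← shift y z (u * v), ← shift (u * v) x (y * z), shift u v x, shift v (x * u) (y * z), shift x u ((y * z) * v), shift (y * z) v x]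

  have k6 : u * (((y * z) * x) * v) = u * (v * (x * (y * z))) := by
    conv_lhs => rw [← shift v u ((y * z) * x), ← shift x (v * u) (y * z), ← shift z (x * (v * u)) y, ← shift (v * u) z x, shift ((v * u) * z) x y, shift v u z, ← shift (z * v) y u, ← shift u x ((z * v) * y), shift z v y, ← shift (y * z) (u * x) v, ← shift x (y * z) u, shift (x * (y * z)) u v]

  have k7 : u * (((z * y) * x) * v) = u * (v * (x * (y * z))) := by
    conv_lhs => rw [shift (z * y) x v, ← shift (v * (z * y)) u x, shift v (z * y) u, shift z y (u * v), shift y ((u * v) * z) x, shift (u * v) z (x * y), ← shift v (x * y) u, ← shift u z (v * (x * y)), ← shift y v x, ← shift x (u * z) (y * v), ← shift z x u, shift (z * x) u (y * v), shift y v (z * x), shift z x y]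

  have k8 : (v * (x * (y * z))) * u = u * (v * (x * (y * z))) := by
    conv_lhs => rw [← shift (y * z) v x, shift ((y * z) * v) x u, shift y z v, ← shift (v * y) u z, ← shift z x ((v * y) * u), ← shift u (z * x) (v * y), ← shift y (u * (z * x)) v, ← shift (z * x) y u, shift ((z * x) * y) u v, shift z x y]

  have k9 : (v * (x * (z * y))) * u = u * (v * (x * (y * z))) := by
    conv_lhs => rw [← shift y x z, ← shift z v (y * x), shift (z * v) (y * x) u, shift y x (u * (z * v)), shift u (z * v) y, shift z v (y * u), ← shift ((y * u) * z) x v, shift (y * u) z x, ← shift u x y, ← shift y z (u * x), ← shift x (y * z) u, shift (x * (y * z)) u v]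

  have k10 : (v * ((y * z) * x)) * u = u * (v * (x * (y * z))) := by
    conv_lhs => rw [shift v ((y * z) * x) u, shift (y * z) x (u * v), shift u v (y * z), ← shift ((y * z) * u) x v, shift y z u, shift z (u * y) x, shift u y (x * z), shift y ((x * z) * u) v, shift (x * z) u (v * y), ← shift z (v * y) x, ← shift y z v, shift (y * z) v x]

  have k11 : (v * ((z * y) * x)) * u = u * (v * (x * (y * z))) := by
    conv_lhs => rw [shift v ((z * y) * x) u, shift (z * y) x (u * v), ← shift y (u * v) z, ← shift z x (y * (u * v)), ← shift (u * v) (z * x) y, shift u v (z * x), shift v ((z * x) * u) y, shift (z * x) u (y * v), shift y v (z * x), shift z x y]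

  have k12 : ((x * (y * z)) * v) * u = u * (v * (x * (y * z))) := by
    conv_lhs => rw [← shift z x y, shift (z * x) y v, shift y (v * (z * x)) u, shift v (z * x) (u * y), shift z x ((u * y) * v), shift (u * y) v z, ← shift (z * (u * y)) x v, shift z (u * y) x, shift u y (x * z), shift y ((x * z) * u) v, shift (x * z) u (v * y), ← shift z (v * y) x, ← shift y z v, shift (y * z) v x]

  have k13 : ((x * (z * y)) * v) * u = u * (v * (x * (y * z))) := by
    conv_lhs => rw [shift x (z * y) v, shift (z * y) (v * x) u, shift v x (u * (z * y)), shift u (z * y) v, shift z y (v * u), shift v u z, ← shift (z * v) y u, ← shift u x ((z * v) * y), shift z v y, ← shift (y * z) (u * x) v, ← shift x (y * z) u, shift (x * (y * z)) u v]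

  have k14 : (((y * z) * x) * v) * u = u * (v * (x * (y * z))) := by
    conv_lhs => rw [shift (y * z) x v, ← shift z v y, ← shift y x (z * v), ← shift v (y * x) z, shift (v * (y * x)) z u, ← shift (y * x) u v, shift y x u, shift x (u * y) v, shift u y (v * x), ← shift ((v * x) * u) z y, shift v x u, shift x (u * v) z, shift u v (z * x), shift v ((z * x) * u) y, shift (z * x) u (y * v), shift y v (z * x), shift z x y]

  have k15 : (((z * y) * x) * v) * u = u * (v * (x * (y * z))) := by
    conv_lhs => rw [shift (z * y) x v, shift x (v * (z * y)) u, ← shift y v z, shift (y * v) z (u * x), ← shift v (u * x) y, ← shift y z (v * (u * x)), ← shift x v u, ← shift u (y * z) (x * v), ← shift v (u * (y * z)) x, ← shift z u y, ← shift y v (z * u), shift (y * v) (z * u) x, shift z u (x * (y * v)), shift x (y * v) z, shift y v (z * x), shift z x y]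

  simp only [mul_sub, sub_mul]
  rw [k1, k2, k3, k4, k5, k6, k7, k8, k9, k10, k11, k12, k13, k14, k15]
  abel
end

section
/- Let A be a cyclic associative algebra. Then the commutator satisfies [[x,y],z] = 0 for all x,y,z, i.e., the associated Lie algebra is nilpotent of class at most 2. -/
theorem stmt_11 {A : Type*} [NonUnitalNonAssocRing A]
    (assoc : ∀ x y z : A, (x * y) * z = x * (y * z))
    (cyc : ∀ x y z : A, (x * y) * z = y * (z * x)) :
    ∀ x y z : A,
      (let c : A → A → A := fun a b => a * b - b * a
       c (c x y) z = 0) := by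
  intro x y z
  have h1 : x * (y * z) = y * (z * x) := by rw [← assoc, cyc]
  have h2 : x * (z * y) = y * (x * z) := by rw [← assoc, cyc, ← assoc, cyc]
  simp only [sub_mul, mul_sub]
  rw [cyc x y z, cyc y x z, ← assoc z x y, cyc, ← assoc z y x, cyc, h1, h2]
  abel
end

section
/- Let A be a shift associative algebra. Then A satisfies the two-step associativity identity ((x,y,z), w, t) = 0, where (a,b,c) = (ab)c - a(bc) is the associator. -/
theorem stmt_12 {A : Type*} [NonUnitalNonAssocRing A]
    (shift : ∀ x y z : A, (x * y) * z = y * (z * x)) :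
    ∀ x y z w t : A,
      (let assoc : A → A → A → A := fun a b c => (a * b) * c - a * (b * c)
       assoc (assoc x y z) w t = 0) := by
  have h1 : ∀ x y z w t : A, (((x*y)*z)*w)*t = ((x*y)*z)*(w*t) := by
    intro x y z w t
    rw [shift (x*y) z w, shift z (w*(x*y)) t, shift w (x*y) (t*z),
        shift x y ((t*z)*w), shift (t*z) w x, ← shift (x*(t*z)) y w,
        ← shift z x t, shift (z*x) t y, shift t (y*(z*x)) w, ← shift x y z]
  intro x y z w t
  show (((x*y)*z - x*(y*z))*w)*t - ((x*y)*z - x*(y*z))*(w*t) = 0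
  have h2 : ((x*(y*z))*w)*t = (x*(y*z))*(w*t) := by
    have h := h1 z x y w t
    rw [shift z x y] at h
    exact h
  rw [sub_mul, sub_mul, h1 x y z w t, h2, ← sub_mul, sub_self]
end

section
/- Let A be a shift associative algebra and p, q fixed elements of A. Define the mutation product x ∗ y = (xp)y - (yq)x. Then (A, ∗) is a cyclic associative algebra, i.e., it satisfies (x∗y)∗z = x∗(y∗z) = y∗(z∗x). -/
theorem stmt_13 {A : Type*} [NonUnitalNonAssocRing A]
    (shift : ∀ x y z : A, (x * y) * z = y * (z * x)) (p q : A) :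
    ∀ x y z : A,
      (let m : A → A → A := fun a b => (a * p) * b - (b * q) * a
       m (m x y) z = m x (m y z) ∧ m (m x y) z = m y (m z x)) := by
  intro x y z
  dsimp only
  have h1 : ((x * p) * ((y * p) * z)) = (p * (p * (x * (y * z)))) := by
    calc ((x * p) * ((y * p) * z))
      _ = ((x * p) * (p * (z * y))) := by rw [shift y p z]
      _ = (((z * y) * (x * p)) * p) := by rw [← shift (z * y) (x * p) p]
      _ = ((y * ((x * p) * z)) * p) := by rw [shift z y (x * p)]
      _ = ((y * (p * (z * x))) * p) := by rw [shift x p z]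
      _ = ((((z * x) * y) * p) * p) := by rw [← shift (z * x) y p]
      _ = (p * (p * ((z * x) * y))) := by rw [shift ((z * x) * y) p p]
      _ = (p * (p * (x * (y * z)))) := by rw [shift z x y]
  have h2 : ((x * p) * ((z * q) * y)) = (p * (q * (x * (y * z)))) := by
    calc ((x * p) * ((z * q) * y))
      _ = (p * (((z * q) * y) * x)) := by rw [shift x p ((z * q) * y)]
      _ = (p * (y * (x * (z * q)))) := by rw [shift (z * q) y x]
      _ = (((x * (z * q)) * p) * y) := by rw [← shift (x * (z * q)) p y]
      _ = (((z * q) * (p * x)) * y) := by rw [shift x (z * q) p]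
      _ = ((p * x) * (y * (z * q))) := by rw [shift (z * q) (p * x) y]
      _ = ((p * x) * ((q * y) * z)) := by rw [← shift q y z]
      _ = ((z * (p * x)) * (q * y)) := by rw [← shift z (p * x) (q * y)]
      _ = (((x * z) * p) * (q * y)) := by rw [← shift x z p]
      _ = (p * ((q * y) * (x * z))) := by rw [shift (x * z) p (q * y)]
      _ = (p * ((z * (q * y)) * x)) := by rw [← shift z (q * y) x]
      _ = (p * (((y * z) * q) * x)) := by rw [← shift y z q]
      _ = (p * (q * (x * (y * z)))) := by rw [shift (y * z) q x]
  have h3 : ((y * p) * ((x * q) * z)) = (p * (q * (x * (y * z)))) := by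
    calc ((y * p) * ((x * q) * z))
      _ = ((y * p) * (q * (z * x))) := by rw [shift x q z]
      _ = (((z * x) * (y * p)) * q) := by rw [← shift (z * x) (y * p) q]
      _ = (((p * (z * x)) * y) * q) := by rw [← shift p (z * x) y]
      _ = (y * (q * (p * (z * x)))) := by rw [shift (p * (z * x)) y q]
      _ = (y * (((z * x) * q) * p)) := by rw [← shift (z * x) q p]
      _ = (y * ((x * (q * z)) * p)) := by rw [shift z x q]
      _ = (y * ((q * z) * (p * x))) := by rw [shift x (q * z) p]
      _ = (((p * x) * y) * (q * z)) := by rw [← shift (p * x) y (q * z)]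
      _ = ((z * ((p * x) * y)) * q) := by rw [← shift z ((p * x) * y) q]
      _ = (((y * z) * (p * x)) * q) := by rw [← shift y z (p * x)]
      _ = (((x * (y * z)) * p) * q) := by rw [← shift x (y * z) p]
      _ = (p * (q * (x * (y * z)))) := by rw [shift (x * (y * z)) p q]
  have h4 : ((y * p) * ((z * p) * x)) = (p * (p * (x * (y * z)))) := by
    calc ((y * p) * ((z * p) * x))
      _ = ((x * (y * p)) * (z * p)) := by rw [← shift x (y * p) (z * p)]
      _ = ((p * (x * (y * p))) * z) := by rw [← shift p (x * (y * p)) z]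
      _ = ((((y * p) * p) * x) * z) := by rw [← shift (y * p) p x]
      _ = (((p * (p * y)) * x) * z) := by rw [shift y p p]
      _ = (((p * y) * (x * p)) * z) := by rw [shift p (p * y) x]
      _ = ((x * p) * (z * (p * y))) := by rw [shift (p * y) (x * p) z]
      _ = (p * ((z * (p * y)) * x)) := by rw [shift x p (z * (p * y))]
      _ = (p * (((y * z) * p) * x)) := by rw [← shift y z p]
      _ = (p * (p * (x * (y * z)))) := by rw [shift (y * z) p x]
  have h5 : ((z * q) * ((x * p) * y)) = (p * (q * (x * (y * z)))) := by
    calc ((z * q) * ((x * p) * y))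
      _ = (q * (((x * p) * y) * z)) := by rw [shift z q ((x * p) * y)]
      _ = (q * (y * (z * (x * p)))) := by rw [shift (x * p) y z]
      _ = (q * (y * ((p * z) * x))) := by rw [← shift p z x]
      _ = (q * ((x * y) * (p * z))) := by rw [← shift x y (p * z)]
      _ = (((p * z) * q) * (x * y)) := by rw [← shift (p * z) q (x * y)]
      _ = ((y * ((p * z) * q)) * x) := by rw [← shift y ((p * z) * q) x]
      _ = ((y * (z * (q * p))) * x) := by rw [shift p z q]
      _ = ((((q * p) * y) * z) * x) := by rw [← shift (q * p) y z]
      _ = (((p * (y * q)) * z) * x) := by rw [shift q p y]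
      _ = (((y * q) * (z * p)) * x) := by rw [shift p (y * q) z]
      _ = ((z * p) * (x * (y * q))) := by rw [shift (y * q) (z * p) x]
      _ = (p * ((x * (y * q)) * z)) := by rw [shift z p (x * (y * q))]
      _ = (p * ((y * q) * (z * x))) := by rw [shift x (y * q) z]
      _ = (p * (q * ((z * x) * y))) := by rw [shift y q (z * x)]
      _ = (p * (q * (x * (y * z)))) := by rw [shift z x y]
  have h6 : ((z * q) * ((y * q) * x)) = (q * (q * (x * (y * z)))) := by
    calc ((z * q) * ((y * q) * x))
      _ = ((x * (z * q)) * (y * q)) := by rw [← shift x (z * q) (y * q)]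
      _ = ((q * (x * (z * q))) * y) := by rw [← shift q (x * (z * q)) y]
      _ = ((q * ((q * x) * z)) * y) := by rw [← shift q x z]
      _ = (((z * q) * (q * x)) * y) := by rw [← shift z q (q * x)]
      _ = ((q * x) * (y * (z * q))) := by rw [shift (z * q) (q * x) y]
      _ = ((q * x) * ((q * y) * z)) := by rw [← shift q y z]
      _ = ((z * (q * x)) * (q * y)) := by rw [← shift z (q * x) (q * y)]
      _ = (((x * z) * q) * (q * y)) := by rw [← shift x z q]
      _ = (q * ((q * y) * (x * z))) := by rw [shift (x * z) q (q * y)]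
      _ = (q * ((z * (q * y)) * x)) := by rw [← shift z (q * y) x]
      _ = (q * (((y * z) * q) * x)) := by rw [← shift y z q]
      _ = (q * (q * (x * (y * z)))) := by rw [shift (y * z) q x]
  have h7 : ((((x * p) * y) * p) * z) = (p * (p * (x * (y * z)))) := by
    calc ((((x * p) * y) * p) * z)
      _ = ((y * (p * (x * p))) * z) := by rw [shift (x * p) y p]
      _ = ((p * (x * p)) * (z * y)) := by rw [shift y (p * (x * p)) z]
      _ = (((p * p) * x) * (z * y)) := by rw [← shift p p x]
      _ = (x * ((z * y) * (p * p))) := by rw [shift (p * p) x (z * y)]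
      _ = (x * (y * ((p * p) * z))) := by rw [shift z y (p * p)]
      _ = (x * (y * (p * (z * p)))) := by rw [shift p p z]
      _ = (x * (((z * p) * y) * p)) := by rw [← shift (z * p) y p]
      _ = ((p * x) * ((z * p) * y)) := by rw [← shift p x ((z * p) * y)]
      _ = ((p * x) * (p * (y * z))) := by rw [shift z p y]
      _ = (((y * z) * (p * x)) * p) := by rw [← shift (y * z) (p * x) p]
      _ = (((x * (y * z)) * p) * p) := by rw [← shift x (y * z) p]
      _ = (p * (p * (x * (y * z)))) := by rw [shift (x * (y * z)) p p]
  have h8 : ((((x * q) * z) * q) * y) = (q * (q * (x * (y * z)))) := by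
    calc ((((x * q) * z) * q) * y)
      _ = ((z * (q * (x * q))) * y) := by rw [shift (x * q) z q]
      _ = ((q * (x * q)) * (y * z)) := by rw [shift z (q * (x * q)) y]
      _ = ((x * q) * ((y * z) * q)) := by rw [shift q (x * q) (y * z)]
      _ = (q * (((y * z) * q) * x)) := by rw [shift x q ((y * z) * q)]
      _ = (q * (q * (x * (y * z)))) := by rw [shift (y * z) q x]
  have h9 : ((((y * p) * z) * q) * x) = (p * (q * (x * (y * z)))) := by
    calc ((((y * p) * z) * q) * x)
      _ = (q * (x * ((y * p) * z))) := by rw [shift ((y * p) * z) q x]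
      _ = (q * (x * (p * (z * y)))) := by rw [shift y p z]
      _ = (q * (((z * y) * x) * p)) := by rw [← shift (z * y) x p]
      _ = ((p * q) * ((z * y) * x)) := by rw [← shift p q ((z * y) * x)]
      _ = ((p * q) * (y * (x * z))) := by rw [shift z y x]
      _ = (((x * z) * (p * q)) * y) := by rw [← shift (x * z) (p * q) y]
      _ = ((z * ((p * q) * x)) * y) := by rw [shift x z (p * q)]
      _ = (((p * q) * x) * (y * z)) := by rw [shift z ((p * q) * x) y]
      _ = ((q * (x * p)) * (y * z)) := by rw [shift p q x]
      _ = ((x * p) * ((y * z) * q)) := by rw [shift q (x * p) (y * z)]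
      _ = (p * (((y * z) * q) * x)) := by rw [shift x p ((y * z) * q)]
      _ = (p * (q * (x * (y * z)))) := by rw [shift (y * z) q x]
  have h10 : ((((y * q) * x) * p) * z) = (p * (q * (x * (y * z)))) := by
    calc ((((y * q) * x) * p) * z)
      _ = (p * (z * ((y * q) * x))) := by rw [shift ((y * q) * x) p z]
      _ = (p * (z * (q * (x * y)))) := by rw [shift y q x]
      _ = (p * (((x * y) * z) * q)) := by rw [← shift (x * y) z q]
      _ = ((q * p) * ((x * y) * z)) := by rw [← shift q p ((x * y) * z)]
      _ = ((q * p) * (y * (z * x))) := by rw [shift x y z]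
      _ = (((z * x) * (q * p)) * y) := by rw [← shift (z * x) (q * p) y]
      _ = (((p * (z * x)) * q) * y) := by rw [← shift p (z * x) q]
      _ = ((((x * p) * z) * q) * y) := by rw [← shift x p z]
      _ = ((z * (q * (x * p))) * y) := by rw [shift (x * p) z q]
      _ = ((q * (x * p)) * (y * z)) := by rw [shift z (q * (x * p)) y]
      _ = ((x * p) * ((y * z) * q)) := by rw [shift q (x * p) (y * z)]
      _ = (p * (((y * z) * q) * x)) := by rw [shift x p ((y * z) * q)]
      _ = (p * (q * (x * (y * z)))) := by rw [shift (y * z) q x]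
  have h11 : ((((z * p) * x) * q) * y) = (p * (q * (x * (y * z)))) := by
    calc ((((z * p) * x) * q) * y)
      _ = (q * (y * ((z * p) * x))) := by rw [shift ((z * p) * x) q y]
      _ = (q * (y * (p * (x * z)))) := by rw [shift z p x]
      _ = (q * (((x * z) * y) * p)) := by rw [← shift (x * z) y p]
      _ = (q * ((z * (y * x)) * p)) := by rw [shift x z y]
      _ = (q * ((y * x) * (p * z))) := by rw [shift z (y * x) p]
      _ = (((p * z) * q) * (y * x)) := by rw [← shift (p * z) q (y * x)]
      _ = ((x * ((p * z) * q)) * y) := by rw [← shift x ((p * z) * q) y]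
      _ = (((q * x) * (p * z)) * y) := by rw [← shift q x (p * z)]
      _ = (((z * (q * x)) * p) * y) := by rw [← shift z (q * x) p]
      _ = (p * (y * (z * (q * x)))) := by rw [shift (z * (q * x)) p y]
      _ = (p * (((q * x) * y) * z)) := by rw [← shift (q * x) y z]
      _ = (p * ((x * (y * q)) * z)) := by rw [shift q x y]
      _ = (p * ((y * q) * (z * x))) := by rw [shift x (y * q) z]
      _ = (p * (q * ((z * x) * y))) := by rw [shift y q (z * x)]
      _ = (p * (q * (x * (y * z)))) := by rw [shift z x y]
  have h12 : ((((z * q) * y) * q) * x) = (q * (q * (x * (y * z)))) := by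
    calc ((((z * q) * y) * q) * x)
      _ = ((y * (q * (z * q))) * x) := by rw [shift (z * q) y q]
      _ = ((q * (z * q)) * (x * y)) := by rw [shift y (q * (z * q)) x]
      _ = (((q * q) * z) * (x * y)) := by rw [← shift q q z]
      _ = (z * ((x * y) * (q * q))) := by rw [shift (q * q) z (x * y)]
      _ = (z * ((q * (x * y)) * q)) := by rw [← shift q (x * y) q]
      _ = ((q * z) * (q * (x * y))) := by rw [← shift q z (q * (x * y))]
      _ = ((q * z) * ((y * q) * x)) := by rw [← shift y q x]
      _ = ((x * (q * z)) * (y * q)) := by rw [← shift x (q * z) (y * q)]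
      _ = (((z * x) * q) * (y * q)) := by rw [← shift z x q]
      _ = (q * ((y * q) * (z * x))) := by rw [shift (z * x) q (y * q)]
      _ = (q * (q * ((z * x) * y))) := by rw [shift y q (z * x)]
      _ = (q * (q * (x * (y * z)))) := by rw [shift z x y]
  constructor <;>
  · simp only [sub_mul, mul_sub]
    simp only [h1, h2, h3, h4, h5, h6, h7, h8, h9, h10, h11, h12]
end

section
/- Let A be a shift associative algebra and p a fixed element. Define x ∗ y = p(xy) - (px)y - x(py). Then (A, ∗) is a cyclic associative algebra. -/
theorem stmt_14 {A : Type*} [NonUnitalNonAssocRing A]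
    (shift : ∀ x y z : A, (x * y) * z = y * (z * x)) (p : A) :
    ∀ x y z : A,
      (let m : A → A → A := fun a b => p * (a * b) - (p * a) * b - a * (p * b)
       m (m x y) z = m x (m y z) ∧ m (m x y) z = m y (m z x)) := by
  intro x y z
  have h0 : p * ((p * (x * y)) * z) = p * (p * (x * (y * z))) := by conv_lhs => rw [shift p (x * y) z, shift x y (z * p), ← shift ((z * p) * x) p y, shift z p x, shift p (x * z) p, shift x z (p * p), shift z ((p * p) * x) y, shift p p x, shift p (x * p) (y * z), shift x p ((y * z) * p), shift (y * z) p x]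
  have h1 : p * (((p * x) * y) * z) = p * (p * (x * (y * z))) := by conv_lhs => rw [shift p x y, shift x (y * p) z, shift y p (z * x), shift z x y]
  have h2 : p * ((x * (p * y)) * z) = p * (p * (x * (y * z))) := by conv_lhs => rw [← shift z p (x * (p * y)), ← shift y x p, ← shift p (z * p) (y * x), ← shift x (p * (z * p)) y, ← shift (z * p) x p, shift z p x, shift p (x * z) p, shift x z (p * p), shift z ((p * p) * x) y, shift p p x, shift p (x * p) (y * z), shift x p ((y * z) * p), shift (y * z) p x]
  have h3 : (p * (p * (x * y))) * z = p * (p * (x * (y * z))) := by conv_lhs => rw [shift p (p * (x * y)) z, ← shift y p x, shift (y * p) x (z * p), shift z p (y * p), ← shift ((y * p) * z) x p, shift (y * p) z x, ← shift p x y, ← shift y z (p * x), ← shift x (y * z) p, shift (x * (y * z)) p p]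
  have h4 : (p * ((p * x) * y)) * z = p * (p * (x * (y * z))) := by conv_lhs => rw [shift p x y, ← shift (y * p) p x, shift y p p, shift p (p * y) x, shift (p * y) (x * p) z, shift x p (z * (p * y)), ← shift y z p, shift (y * z) p x]
  have h5 : (p * (x * (p * y))) * z = p * (p * (x * (y * z))) := by conv_lhs => rw [← shift (p * y) p x, shift p y p, shift y (p * p) x, shift p p (x * y), shift p ((x * y) * p) z, shift x y p, shift y (p * x) (z * p), shift z p y, ← shift (y * z) (p * x) p, ← shift x (y * z) p, shift (x * (y * z)) p p]
  have h6 : (p * (x * y)) * (p * z) = p * (p * (x * (y * z))) := by conv_lhs => rw [← shift y p x, shift (y * p) x (p * z), shift p z (y * p), ← shift ((y * p) * p) x z, shift y p p, shift p (p * y) x, shift (p * y) (x * p) z, shift x p (z * (p * y)), ← shift y z p, shift (y * z) p x]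
  have h7 : ((p * x) * y) * (p * z) = p * (p * (x * (y * z))) := by conv_lhs => rw [← shift z ((p * x) * y) p, ← shift y z (p * x), ← shift x (y * z) p, shift (x * (y * z)) p p]
  have h8 : (x * (p * y)) * (p * z) = p * (p * (x * (y * z))) := by conv_lhs => rw [← shift z (x * (p * y)) p, ← shift (p * y) z x, shift ((p * y) * z) x p, ← shift z p (p * y), ← shift y (z * p) p, ← shift p x (y * (z * p)), ← shift p y z, ← shift z (p * x) (p * y), ← shift x z p, shift (x * z) p (p * y), ← shift z (p * y) x, ← shift y z p, shift (y * z) p x]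
  have h9 : p * (x * (p * (y * z))) = p * (p * (x * (y * z))) := by conv_lhs => rw [← shift (p * (y * z)) p x, shift p (y * z) p, shift (y * z) (p * p) x, shift p p (x * (y * z)), ← shift z x y, shift (z * x) y p, ← shift (p * (z * x)) p y, ← shift x p z, shift (x * p) z p, shift z (p * (x * p)) y, shift p (x * p) (y * z), shift x p ((y * z) * p), shift (y * z) p x]
  have h10 : p * (x * ((p * y) * z)) = p * (p * (x * (y * z))) := by conv_lhs => rw [← shift z x (p * y), ← shift y (z * x) p, ← shift p p (y * (z * x)), ← shift (z * x) (p * p) y, ← shift p (z * x) p, ← shift x p z, shift (x * p) z p, shift z (p * (x * p)) y, shift p (x * p) (y * z), shift x p ((y * z) * p), shift (y * z) p x]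
  have h11 : p * (x * (y * (p * z))) = p * (p * (x * (y * z))) := by conv_lhs => rw [← shift (p * z) x y, ← shift y p ((p * z) * x), ← shift x (y * p) (p * z), ← shift z (x * (y * p)) p, ← shift p x y, ← shift y z (p * x), ← shift x (y * z) p, shift (x * (y * z)) p p]
  have h12 : (p * x) * (p * (y * z)) = p * (p * (x * (y * z))) := by conv_lhs => rw [← shift (y * z) (p * x) p, ← shift x (y * z) p, shift (x * (y * z)) p p]
  have h13 : (p * x) * ((p * y) * z) = p * (p * (x * (y * z))) := by conv_lhs => rw [← shift z (p * x) (p * y), ← shift x z p, shift (x * z) p (p * y), ← shift z (p * y) x, ← shift y z p, shift (y * z) p x]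
  have h14 : (p * x) * (y * (p * z)) = p * (p * (x * (y * z))) := by conv_lhs => rw [← shift z y p, ← shift p (p * x) (z * y), ← shift y (p * (p * x)) z, ← shift x p p, ← shift p y (x * p), shift (p * y) (x * p) z, shift x p (z * (p * y)), ← shift y z p, shift (y * z) p x]
  have h15 : x * (p * (p * (y * z))) = p * (p * (x * (y * z))) := by conv_lhs => rw [← shift (y * z) p p, shift y z p, shift z (p * y) p, shift p y (p * z), ← shift ((p * z) * p) x y, shift (p * z) p x, shift p (x * (p * z)) y, ← shift z x p, shift (z * x) p (y * p), shift y p (z * x), shift z x y]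
  have h16 : x * (p * ((p * y) * z)) = p * (p * (x * (y * z))) := by conv_lhs => rw [← shift z p (p * y), ← shift y (z * p) p, ← shift p x (y * (z * p)), ← shift p y z, ← shift z (p * x) (p * y), ← shift x z p, shift (x * z) p (p * y), ← shift z (p * y) x, ← shift y z p, shift (y * z) p x]
  have h17 : x * (p * (y * (p * z))) = p * (p * (x * (y * z))) := by conv_lhs => rw [← shift z y p, ← shift p p (z * y), ← shift y (p * p) z, ← shift z x (y * (p * p)), ← shift (p * p) (z * x) y, shift p p (z * x), shift p ((z * x) * p) y, shift (z * x) p (y * p), shift y p (z * x), shift z x y]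
  have h18 : p * (y * (p * (z * x))) = p * (p * (x * (y * z))) := by conv_lhs => rw [← shift (p * (z * x)) p y, ← shift x p z, shift (x * p) z p, shift z (p * (x * p)) y, shift p (x * p) (y * z), shift x p ((y * z) * p), shift (y * z) p x]
  have h19 : p * (y * ((p * z) * x)) = p * (p * (x * (y * z))) := by conv_lhs => rw [← shift x y (p * z), ← shift (p * z) p (x * y), ← shift y ((p * z) * p) x, shift p z p, ← shift (p * p) y z, shift p p y, shift p (y * p) z, shift (y * p) (z * p) x, shift z p (x * (y * p)), shift x (y * p) z, shift y p (z * x), shift z x y]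
  have h20 : p * (y * (z * (p * x))) = p * (p * (x * (y * z))) := by conv_lhs => rw [← shift (p * x) y z, shift p x y, shift x (y * p) z, shift y p (z * x), shift z x y]
  have h21 : (p * y) * (p * (z * x)) = p * (p * (x * (y * z))) := by conv_lhs => rw [← shift (z * x) (p * y) p, shift z x (p * y), shift x ((p * y) * z) p, shift p y z, shift y (z * p) (p * x), shift z p ((p * x) * y), shift p x y, shift x (y * p) z, shift y p (z * x), shift z x y]
  have h22 : (p * y) * ((p * z) * x) = p * (p * (x * (y * z))) := by conv_lhs => rw [← shift x (p * y) (p * z), ← shift z (x * (p * y)) p, ← shift (p * y) z x, shift ((p * y) * z) x p, ← shift z p (p * y), ← shift y (z * p) p, ← shift p x (y * (z * p)), ← shift p y z, ← shift z (p * x) (p * y), ← shift x z p, shift (x * z) p (p * y), ← shift z (p * y) x, ← shift y z p, shift (y * z) p x]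
  have h23 : (p * y) * (z * (p * x)) = p * (p * (x * (y * z))) := by conv_lhs => rw [shift p y (z * (p * x)), ← shift x z p, shift (x * z) p p, ← shift (p * (x * z)) y p, ← shift z p x, shift (z * p) x y, shift x (y * (z * p)) p, shift y (z * p) (p * x), shift z p ((p * x) * y), shift p x y, shift x (y * p) z, shift y p (z * x), shift z x y]
  have h24 : y * (p * (p * (z * x))) = p * (p * (x * (y * z))) := by conv_lhs => rw [← shift (z * x) p p, shift z x p, shift x (p * z) p, ← shift (p * x) y (p * z), ← shift z ((p * x) * y) p, ← shift y z (p * x), ← shift x (y * z) p, shift (x * (y * z)) p p]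
  have h25 : y * (p * ((p * z) * x)) = p * (p * (x * (y * z))) := by conv_lhs => rw [← shift ((p * z) * x) y p, shift (p * z) x y, shift x (y * (p * z)) p, shift y (p * z) (p * x), shift p z ((p * x) * y), shift (p * x) y p, ← shift x p p, ← shift p y (x * p), ← shift (x * p) z (p * y), ← shift y ((x * p) * z) p, shift x p z, ← shift (z * x) y p, shift ((z * x) * y) p p, shift z x y]
  have h26 : y * (p * (z * (p * x))) = p * (p * (x * (y * z))) := by conv_lhs => rw [← shift (z * (p * x)) y p, shift z (p * x) y, shift (p * x) (y * z) p, ← shift x p p, ← shift p (y * z) (x * p), ← shift p (p * (y * z)) x, ← shift z p y, ← shift y p (z * p), shift (y * p) (z * p) x, shift z p (x * (y * p)), shift x (y * p) z, shift y p (z * x), shift z x y]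
  constructor <;>
  · show _ = _
    simp only [mul_sub, sub_mul]
    simp only [h0, h1, h2, h3, h4, h5, h6, h7, h8, h9, h10, h11, h12, h13, h14, h15, h16, h17, h18, h19, h20, h21, h22, h23, h24, h25, h26]
end

section
/- Let A be a shift associative algebra with an idempotent e (e·e = e). Then ex = xe for every x in A. -/
theorem stmt_15 {A : Type*} [NonUnitalNonAssocRing A]
    (shift : ∀ x y z : A, (x * y) * z = y * (z * x))
    (e : A) (he : e * e = e) :
    ∀ x : A, e * x = x * e := by
  have h3 : ∀ y : A, (e * y) * e = y * e := fun y => by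
    rw [shift e y e, he]
  have key : ∀ y : A, e * y = e * (y * e) := fun y => by
    have := shift e e y; rwa [he] at this
  have h1 : ∀ y : A, e * y = e * (e * y) := fun y => by
    calc e * y = e * (y * e) := key y
      _ = e * ((e * y) * e) := by rw [h3]
      _ = e * (e * y) := by
          have := shift e e (e * y); rw [he] at this; exact this.symm
  have h2 : ∀ y : A, (y * e) * e = e * y := fun y => by
    rw [shift y e e]; exact (h1 y).symm
  intro x
  calc e * x = e * (x * e) := key x
    _ = ((x * e) * e) * e := (h2 (x * e)).symm
    _ = (e * x) * e := by rw [h2 x]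
    _ = x * e := h3 x
end

section
/- Let A be a shift associative algebra over a field of characteristic not 2. Then A is power-associative: the subalgebra generated by any single element is associative. -/
section aux

variable {K A : Type*} [Field K] [NonUnitalNonAssocRing A] [Module K A]
    [IsScalarTower K A A] [SMulCommClass K A A]

/-- `powAux x n = x^(n+1)` (right-normed powers). -/
private def powAux (x : A) : ℕ → A
  | 0 => x
  | n + 1 => x * powAux x n

private lemma powAux_mul_powAux' (shift : ∀ x y z : A, (x * y) * z = y * (z * x)) (x : A) :
    ∀ n a b : ℕ, a + b = n → powAux x a * powAux x b = powAux x (n + 1) := by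
  intro n
  induction n with
  | zero =>
    intro a b hab
    obtain ⟨rfl, rfl⟩ : a = 0 ∧ b = 0 := by omega
    rfl
  | succ n ih =>
    have key : powAux x (n + 1) * x = powAux x (n + 2) := by
      have h1 : (powAux x n * x) * x = x * (x * powAux x n) := shift (powAux x n) x x
      have h2 : powAux x n * x = powAux x (n + 1) := ih n 0 (by omega)
      have h3 : powAux x (n + 2) = x * (x * powAux x n) := rfl
      rw [h2] at h1
      rw [h3, ← h1]
    intro a b hab
    match b, hab with
    | 0, hab =>
      have ha : a = n + 1 := by omega
      subst ha
      exact key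
    | b' + 1, hab =>
      have h1 : (powAux x b' * powAux x a) * x = powAux x a * (x * powAux x b') :=
        shift (powAux x b') (powAux x a) x
      have h2 : powAux x b' * powAux x a = powAux x (n + 1) := ih b' a (by omega)
      have h3 : powAux x (b' + 1) = x * powAux x b' := rfl
      rw [h2] at h1
      rw [h3, ← h1, key]

private lemma powAux_mul_powAux (shift : ∀ x y z : A, (x * y) * z = y * (z * x)) (x : A)
    (a b : ℕ) : powAux x a * powAux x b = powAux x (a + b + 1) :=
  powAux_mul_powAux' shift x (a + b) a b rfl

end aux

theorem stmt_16 {K A : Type*} [Field K] [NonUnitalNonAssocRing A] [Module K A]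
    [IsScalarTower K A A] [SMulCommClass K A A] (h2 : (2 : K) ≠ 0)
    (shift : ∀ x y z : A, (x * y) * z = y * (z * x)) :
    ∀ x : A, ∀ a b c : A,
      a ∈ NonUnitalAlgebra.adjoin K ({x} : Set A) →
      b ∈ NonUnitalAlgebra.adjoin K ({x} : Set A) →
      c ∈ NonUnitalAlgebra.adjoin K ({x} : Set A) →
      (a * b) * c = a * (b * c) := by
  intro x a b c ha hb hc
  set sp : Submodule K A := Submodule.span K (Set.range (powAux x)) with hsp
  have pmul : ∀ i j : ℕ, powAux x i * powAux x j = powAux x (i + j + 1) :=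
    powAux_mul_powAux shift x
  -- multiplication of a power with an element of the span stays in the span
  have pow_mul_mem : ∀ i : ℕ, ∀ b ∈ sp, powAux x i * b ∈ sp := by
    intro i b hb
    induction hb using Submodule.span_induction with
    | mem y hy =>
      obtain ⟨j, rfl⟩ := hy
      rw [pmul]
      exact Submodule.subset_span ⟨i + j + 1, rfl⟩
    | zero => rw [mul_zero]; exact zero_mem _
    | add y z _ _ hy hz => rw [mul_add]; exact add_mem hy hz
    | smul r y _ hy => rw [mul_smul_comm]; exact Submodule.smul_mem _ _ hy
  have mul_mem' : ∀ a ∈ sp, ∀ b ∈ sp, a * b ∈ sp := by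
    intro a ha b hb
    induction ha using Submodule.span_induction with
    | mem y hy =>
      obtain ⟨i, rfl⟩ := hy
      exact pow_mul_mem i b hb
    | zero => rw [zero_mul]; exact zero_mem _
    | add y z _ _ hy hz => rw [add_mul]; exact add_mem hy hz
    | smul r y _ hy => rw [smul_mul_assoc]; exact Submodule.smul_mem _ _ hy
  -- the adjoin is contained in the span of powers
  have adj_le : ∀ a ∈ NonUnitalAlgebra.adjoin K ({x} : Set A), a ∈ sp := by
    intro a ha
    induction ha using NonUnitalAlgebra.adjoin_induction with
    | mem y hy =>
      rcases hy with rfl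
      exact Submodule.subset_span ⟨0, rfl⟩
    | add y z _ _ hy hz => exact add_mem hy hz
    | zero => exact zero_mem _
    | mul y z _ _ hy hz => exact mul_mem' y hy z hz
    | smul r y _ hy => exact Submodule.smul_mem _ _ hy
  -- associativity of powers
  have A3 : ∀ i j k : ℕ,
      (powAux x i * powAux x j) * powAux x k = powAux x i * (powAux x j * powAux x k) := by
    intro i j k
    rw [pmul, pmul, pmul, pmul]
    congr 1
    omega
  -- extend by trilinearity
  have L3 : ∀ i j : ℕ, ∀ c ∈ sp,
      (powAux x i * powAux x j) * c = powAux x i * (powAux x j * c) := by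
    intro i j c hc
    induction hc using Submodule.span_induction with
    | mem y hy => obtain ⟨k, rfl⟩ := hy; exact A3 i j k
    | zero => rw [mul_zero, mul_zero, mul_zero]
    | add y z _ _ hy hz => rw [mul_add, mul_add, mul_add, hy, hz]
    | smul r y _ hy => rw [mul_smul_comm, mul_smul_comm, mul_smul_comm, hy]
  have L2 : ∀ i : ℕ, ∀ b ∈ sp, ∀ c ∈ sp,
      (powAux x i * b) * c = powAux x i * (b * c) := by
    intro i b hb
    induction hb using Submodule.span_induction with
    | mem y hy =>
      obtain ⟨j, rfl⟩ := hy
      exact L3 i j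
    | zero => intro c hc; simp
    | add y z _ _ hy hz =>
      intro c hc
      rw [mul_add, add_mul, add_mul, mul_add, hy c hc, hz c hc]
    | smul r y _ hy =>
      intro c hc
      rw [mul_smul_comm, smul_mul_assoc, smul_mul_assoc, mul_smul_comm, hy c hc]
  have L1 : ∀ a ∈ sp, ∀ b ∈ sp, ∀ c ∈ sp, (a * b) * c = a * (b * c) := by
    intro a ha
    induction ha using Submodule.span_induction with
    | mem y hy =>
      obtain ⟨i, rfl⟩ := hy
      exact L2 i
    | zero => intro b _ c _; rw [zero_mul, zero_mul, zero_mul]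
    | add y z _ _ hy hz =>
      intro b hb c hc
      rw [add_mul, add_mul, add_mul, hy b hb c hc, hz b hb c hc]
    | smul r y _ hy =>
      intro b hb c hc
      rw [smul_mul_assoc, smul_mul_assoc, smul_mul_assoc, hy b hb c hc]
  exact L1 a (adj_le a ha) b (adj_le b hb) c (adj_le c hc)
end

section
/- Let A be a shift associative algebra with idempotent e ≠ 0 over a field of characteristic not 2, and set A_i = {x ∈ A : xe + ex = 2ix} for i ∈ {0,1}. Then A_0·A_1 = A_1·A_0 = 0, A_0·A_0 ⊆ A_0, and A_1·A_1 ⊆ A_1; moreover A = A_0 ⊕ A_1, so A_0 and A_1 are ideals. -/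
theorem stmt_17 {K A : Type*} [Field K] [NonUnitalNonAssocRing A] [Module K A]
    [IsScalarTower K A A] [SMulCommClass K A A] (h2 : (2 : K) ≠ 0)
    (shift : ∀ x y z : A, (x * y) * z = y * (z * x))
    (e : A) (he : e * e = e) (hne : e ≠ 0) :
    (∀ x y : A, x * e + e * x = 0 → y * e + e * y = 2 • y → x * y = 0 ∧ y * x = 0) ∧
    (∀ x y : A, x * e + e * x = 0 → y * e + e * y = 0 →
      (x * y) * e + e * (x * y) = 0) ∧
    (∀ x y : A, x * e + e * x = 2 • x → y * e + e * y = 2 • y →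
      (x * y) * e + e * (x * y) = 2 • (x * y)) ∧
    (∀ a : A, ∃ x y : A, x * e + e * x = 0 ∧ y * e + e * y = 2 • y ∧ a = x + y) ∧
    (∀ x : A, x * e + e * x = 0 → x * e + e * x = 2 • x → x = 0) := by
  -- basic consequences of shift associativity with e
  have s1 : ∀ x : A, (x * e) * e = e * (e * x) := fun x => shift x e e
  have s2 : ∀ x : A, (e * x) * e = x * e := by
    intro x; have := shift e x e; rwa [he] at this
  have s3 : ∀ x : A, e * x = e * (x * e) := by
    intro x; have := shift e e x; rwa [he] at this
  -- e * (e * x) = e * x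
  have hee : ∀ x : A, e * (e * x) = e * x := by
    intro x
    calc e * (e * x) = e * ((e * x) * e) := s3 (e * x)
      _ = e * (x * e) := by rw [s2]
      _ = e * x := (s3 x).symm
  -- (x * e) * e = x * e
  have hxee : ∀ x : A, (x * e) * e = x * e := by
    intro x
    have h := s2 (x * e)
    have h' : e * (x * e) = e * x := (s3 x).symm
    rw [h'] at h
    rw [s2] at h
    exact h.symm
  -- e commutes with everything
  have hcomm : ∀ x : A, e * x = x * e := by
    intro x
    have := s1 x
    rw [hxee, hee] at this
    exact this.symm
  -- cancellation of 2
  have hhalf : ∀ z : A, z + z = 0 → z = 0 := by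
    intro z hz
    have h1 : (2 : K) • z = 0 := by rw [two_smul]; exact hz
    have := congrArg (fun w => (2 : K)⁻¹ • w) h1
    simpa [smul_smul, inv_mul_cancel₀ h2] using this
  -- membership translations
  have hx0 : ∀ x : A, x * e + e * x = 0 → e * x = 0 := by
    intro x hx
    apply hhalf
    rw [← hcomm] at hx
    linear_combination (norm := abel) hx
  have hx1 : ∀ x : A, x * e + e * x = 2 • x → e * x = x := by
    intro x hx
    rw [← hcomm, two_smul] at hx
    have : (e * x - x) + (e * x - x) = 0 := by
      linear_combination (norm := abel) hx
    have := hhalf _ this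
    linear_combination (norm := abel) this
  refine ⟨?_, ?_, ?_, ?_, ?_⟩
  · intro x y hx hy
    have hx' := hx0 x hx
    have hy' := hx1 y hy
    constructor
    · have := shift e x y  -- (e*x)*y = x*(y*e)
      rw [hx', zero_mul, ← hcomm, hy'] at this
      exact this.symm
    · have := shift y e x  -- (y*e)*x = e*(x*y)
      rw [← hcomm y, hy'] at this
      rw [this]
      have hxy : x * y = 0 := by
        have h := shift e x y
        rw [hx', zero_mul, ← hcomm, hy'] at h
        exact h.symm
      rw [hxy, mul_zero]
  · intro x y hx hy
    have hx' := hx0 x hx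
    have hy' := hx0 y hy
    -- e * (x*y) = 0 via shift y e x : (y*e)*x = e*(x*y)
    have h1 : e * (x * y) = 0 := by
      have := shift y e x
      rw [← hcomm y, hy', zero_mul] at this
      exact this.symm
    rw [← hcomm, h1, add_zero]
  · intro x y hx hy
    have hx' := hx1 x hx
    have hy' := hx1 y hy
    -- e*(y*x) = x*y  via shift x e y : (x*e)*y = e*(y*x)
    have key : ∀ a b : A, e * a = a → e * b = b → e * (b * a) = a * b := by
      intro a b ha hb
      have := shift a e b
      rw [← hcomm a, ha] at this
      exact this.symm
    have h1 : e * (y * x) = x * y := key x y hx' hy'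
    have h2 : e * (x * y) = y * x := key y x hy' hx'
    have hcm : x * y = y * x := by
      calc x * y = e * (y * x) := h1.symm
        _ = e * (e * (x * y)) := by rw [h2]
        _ = e * (x * y) := hee _
        _ = y * x := h2
    rw [← hcomm, h2, ← hcm, two_smul]
  · intro a
    refine ⟨a - e * a, e * a, ?_, ?_, by abel⟩
    · have h : e * (a - e * a) = 0 := by rw [mul_sub, hee, sub_self]
      rw [← hcomm, h, add_zero]
    · rw [← hcomm, hee, ← two_smul ℕ]
  · intro x h0 h1
    rw [h0] at h1
    apply hhalf
    rw [← two_smul ℕ]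
    exact h1.symm
end

section
/- A finite-dimensional simple shift associative algebra over an algebraically closed field of characteristic not 2 is one-dimensional, isomorphic to the base field. -/
open Module LinearMap Submodule

section Burnside

variable {K V : Type*} [Field K] [IsAlgClosed K] [AddCommGroup V] [Module K V]
  [FiniteDimensional K V]

theorem my_burnside_trans (S : Submodule K (V →ₗ[K] V))
    (hcomp : ∀ f ∈ S, ∀ g ∈ S, f ∘ₗ g ∈ S)
    (hirr : ∀ W : Submodule K V, (∀ f ∈ S, ∀ x ∈ W, f x ∈ W) → W = ⊥ ∨ W = ⊤)
    (hS : S ≠ ⊥) {x : V} (hx : x ≠ 0) (z : V) : ∃ f ∈ S, f x = z := by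
  set W : Submodule K V := S.map (LinearMap.applyₗ x) with hW
  have hWinv : ∀ f ∈ S, ∀ y ∈ W, f y ∈ W := by
    intro f hf y hy
    obtain ⟨g, hg, rfl⟩ := Submodule.mem_map.mp hy
    exact Submodule.mem_map.mpr ⟨f ∘ₗ g, hcomp f hf g hg, rfl⟩
  rcases hirr W hWinv with h | h
  · exfalso
    set N : Submodule K V :=
      { carrier := {y | ∀ f ∈ S, f y = 0}
        add_mem' := fun {a b} ha hb f hf => by
          rw [map_add, ha f hf, hb f hf, add_zero]
        zero_mem' := fun f hf => map_zero f
        smul_mem' := fun c y hy f hf => by rw [map_smul, hy f hf, smul_zero] } with hN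
    have hNinv : ∀ f ∈ S, ∀ y ∈ N, f y ∈ N := by
      intro f hf y hy g hg
      have h1 : (g ∘ₗ f) y = 0 := hy _ (hcomp g hg f hf)
      simpa using h1
    have hxN : x ∈ N := by
      intro f hf
      have h2 : f x ∈ W := Submodule.mem_map.mpr ⟨f, hf, rfl⟩
      rw [h] at h2; simpa using h2
    rcases hirr N hNinv with h' | h'
    · rw [h'] at hxN; exact hx (by simpa using hxN)
    · apply hS
      rw [Submodule.eq_bot_iff]
      intro f hf
      ext y
      have : y ∈ N := h' ▸ Submodule.mem_top
      simpa using this f hf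
  · have : z ∈ W := h ▸ Submodule.mem_top
    obtain ⟨f, hf, hfz⟩ := Submodule.mem_map.mp this
    exact ⟨f, hf, hfz⟩

theorem my_burnside (S : Submodule K (V →ₗ[K] V))
    (hcomp : ∀ f ∈ S, ∀ g ∈ S, f ∘ₗ g ∈ S)
    (hirr : ∀ W : Submodule K V, (∀ f ∈ S, ∀ x ∈ W, f x ∈ W) → W = ⊥ ∨ W = ⊤)
    (hS : S ≠ ⊥) : S = ⊤ := by
  classical
  have htrans : ∀ {x : V}, x ≠ 0 → ∀ z : V, ∃ f ∈ S, f x = z :=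
    fun hx z => my_burnside_trans S hcomp hirr hS hx z
  obtain ⟨v', hv'S, hv'⟩ := (Submodule.ne_bot_iff S).mp hS
  set P : ℕ → Prop := fun r => ∃ v, v ∈ S ∧ v ≠ 0 ∧ finrank K (LinearMap.range v) = r
    with hPdef
  have hex : ∃ r, P r := ⟨_, v', hv'S, hv', rfl⟩
  obtain ⟨v₀, hv₀S, hv₀, hv₀r⟩ := Nat.find_spec hex
  set r₀ : ℕ := Nat.find hex with hr₀
  have hr₀pos : 0 < r₀ := by
    rcases Nat.eq_zero_or_pos r₀ with h | h
    · exfalso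
      rw [h] at hv₀r
      exact hv₀ (LinearMap.range_eq_bot.mp (Submodule.finrank_eq_zero.mp hv₀r))
    · exact h
  -- minimal rank is 1
  have hr₀1 : r₀ = 1 := by
    by_contra hne
    have h2 : 2 ≤ r₀ := by omega
    obtain ⟨u₁, hu₁⟩ : ∃ u, v₀ u ≠ 0 := by
      by_contra hcon
      push_neg at hcon
      exact hv₀ (LinearMap.ext fun u => hcon u)
    obtain ⟨u₂, hu₂⟩ : ∃ u, v₀ u ∉ Submodule.span K {v₀ u₁} := by
      by_contra hcon
      push_neg at hcon
      have hle : LinearMap.range v₀ ≤ Submodule.span K {v₀ u₁} := by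
        rintro _ ⟨u, rfl⟩; exact hcon u
      have : r₀ ≤ 1 := by
        rw [← hv₀r] at h2 ⊢
        calc finrank K (LinearMap.range v₀) ≤ finrank K (Submodule.span K {v₀ u₁}) :=
              Submodule.finrank_mono hle
          _ = 1 := finrank_span_singleton hu₁
      omega
    obtain ⟨w, hwS, hwy⟩ := htrans hu₁ u₂
    -- restriction of v₀ ∘ w to range v₀
    have hmaps : ∀ y ∈ LinearMap.range v₀, (v₀ ∘ₗ w) y ∈ LinearMap.range v₀ :=
      fun y _ => ⟨w y, rfl⟩
    set S' : LinearMap.range v₀ →ₗ[K] LinearMap.range v₀ := (v₀ ∘ₗ w).restrict hmaps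
      with hS'
    haveI : Nontrivial (LinearMap.range v₀) :=
      Submodule.nontrivial_iff_ne_bot.mpr (fun hbot => hv₀ (LinearMap.range_eq_bot.mp hbot))
    obtain ⟨μ, hμ⟩ := Module.End.exists_eigenvalue (S' : Module.End K (LinearMap.range v₀))
    obtain ⟨y, hy⟩ := hμ.exists_hasEigenvector
    set v₁ : V →ₗ[K] V := v₀ ∘ₗ w ∘ₗ v₀ - μ • v₀ with hv₁def
    have hv₁S : v₁ ∈ S := by
      apply Submodule.sub_mem
      · have h3 : w ∘ₗ v₀ ∈ S := hcomp w hwS v₀ hv₀S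
        have h4 := hcomp v₀ hv₀S _ h3
        simpa [LinearMap.comp_assoc] using h4
      · exact Submodule.smul_mem _ _ hv₀S
    have hv₁ne : v₁ ≠ 0 := by
      intro hcon
      have h5 : v₁ u₁ = 0 := by rw [hcon]; rfl
      have h6 : v₀ (w (v₀ u₁)) - μ • v₀ u₁ = 0 := by simpa [hv₁def] using h5
      rw [hwy] at h6
      apply hu₂
      have : v₀ u₂ = μ • v₀ u₁ := by linear_combination (norm := module) h6
      rw [this]
      exact Submodule.smul_mem _ _ (Submodule.mem_span_singleton_self _)
    have hrlt : finrank K (LinearMap.range v₁) < r₀ := by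
      set g : LinearMap.range v₀ →ₗ[K] LinearMap.range v₀ := S' - μ • LinearMap.id with hg
      have hker : LinearMap.ker g ≠ ⊥ := by
        intro hbot
        have : y ∈ LinearMap.ker g := by
          simp only [hg, LinearMap.mem_ker, LinearMap.sub_apply, LinearMap.smul_apply,
            LinearMap.id_apply]
          rw [hy.apply_eq_smul]; simp
        rw [hbot] at this
        exact hy.2 (by simpa using this)
      have hle : LinearMap.range v₁ ≤
          (LinearMap.range g).map (LinearMap.range v₀).subtype := by
        rintro _ ⟨u, rfl⟩
        refine ⟨g ⟨v₀ u, ⟨u, rfl⟩⟩, ⟨_, rfl⟩, ?_⟩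
        simp only [hg, LinearMap.sub_apply, LinearMap.smul_apply, LinearMap.id_apply, hS']
        rw [LinearMap.restrict_apply]
        simp [hv₁def]
      have h7 : finrank K (LinearMap.range v₁) ≤ finrank K (LinearMap.range g) := by
        calc finrank K (LinearMap.range v₁)
            ≤ finrank K ((LinearMap.range g).map (LinearMap.range v₀).subtype) :=
              Submodule.finrank_mono hle
          _ = finrank K (LinearMap.range g) := Submodule.finrank_map_subtype_eq _ _
      have h8 : finrank K (LinearMap.range g) + finrank K (LinearMap.ker g) =
          finrank K (LinearMap.range v₀) := LinearMap.finrank_range_add_finrank_ker g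
      have h9 : 0 < finrank K (LinearMap.ker g) := by
        rcases Nat.eq_zero_or_pos (finrank K (LinearMap.ker g)) with h | h
        · exact absurd (Submodule.finrank_eq_zero.mp h) hker
        · exact h
      omega
    exact Nat.find_min hex hrlt ⟨v₁, hv₁S, hv₁ne, rfl⟩
  -- v₀ has rank one
  rw [hr₀1] at hv₀r
  obtain ⟨u₀, hu₀⟩ : ∃ u, v₀ u ≠ 0 := by
    by_contra hcon; push_neg at hcon; exact hv₀ (LinearMap.ext fun u => hcon u)
  set y : V := v₀ u₀ with hydef
  have hy : y ≠ 0 := hu₀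
  have hrange : LinearMap.range v₀ = Submodule.span K {y} := by
    symm
    apply Submodule.eq_of_le_of_finrank_le
    · rw [Submodule.span_le, Set.singleton_subset_iff]; exact ⟨u₀, rfl⟩
    · rw [hv₀r, finrank_span_singleton hy]
  set e := LinearEquiv.toSpanNonzeroSingleton K V y hy with hedef
  have hmem : ∀ u, v₀ u ∈ Submodule.span K {y} :=
    fun u => hrange ▸ LinearMap.mem_range_self v₀ u
  set φ : V →ₗ[K] K :=
    e.symm.toLinearMap ∘ₗ (v₀.codRestrict (Submodule.span K {y}) hmem) with hφdef
  have hφ : ∀ u, v₀ u = φ u • y := by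
    intro u
    have h1 : e (φ u) = ⟨v₀ u, hmem u⟩ := by
      show e (e.symm ⟨v₀ u, hmem u⟩) = _
      exact e.apply_symm_apply _
    have h2 : (e (φ u) : V) = φ u • y := by
      rw [hedef, LinearEquiv.toSpanNonzeroSingleton_apply]
    rw [h1] at h2
    have h3 : φ u • y = v₀ u := by simpa using h2.symm
    exact h3.symm
  have hφu₀ : φ u₀ ≠ 0 := by
    intro hcon
    apply hy
    have := hφ u₀
    rw [hcon, zero_smul] at this
    exact this
  have hr1 : ∀ z, ∃ f ∈ S, ∀ x, f x = φ x • z := by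
    intro z
    obtain ⟨w, hw, hwy⟩ := htrans hy z
    refine ⟨w ∘ₗ v₀, hcomp w hw v₀ hv₀S, fun x => ?_⟩
    rw [LinearMap.comp_apply, hφ, map_smul, hwy]
  set Ψ : Submodule K (V →ₗ[K] K) :=
    { carrier := {ψ | ∀ z, LinearMap.toSpanSingleton K V z ∘ₗ ψ ∈ S}
      zero_mem' := fun z => by
        rw [LinearMap.comp_zero]; exact S.zero_mem
      add_mem' := fun {a b} ha hb z => by
        rw [LinearMap.comp_add]; exact S.add_mem (ha z) (hb z)
      smul_mem' := fun c ψ hψ z => by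
        have : LinearMap.toSpanSingleton K V z ∘ₗ (c • ψ) =
            c • (LinearMap.toSpanSingleton K V z ∘ₗ ψ) := by
          ext v; simp [smul_smul]
        rw [this]; exact S.smul_mem c (hψ z) } with hΨdef
  have hφΨ : φ ∈ Ψ := by
    intro z
    obtain ⟨f, hf, hfx⟩ := hr1 z
    have : LinearMap.toSpanSingleton K V z ∘ₗ φ = f := by
      ext x; simp [LinearMap.toSpanSingleton_apply, hfx x]
    rw [this]; exact hf
  have hΨright : ∀ ψ, ψ ∈ Ψ → ∀ w ∈ S, ψ ∘ₗ w ∈ Ψ := by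
    intro ψ hψ w hw z
    rw [← LinearMap.comp_assoc]
    exact hcomp _ (hψ z) w hw
  have hW'inv : ∀ f ∈ S, ∀ x ∈ Ψ.dualCoannihilator, f x ∈ Ψ.dualCoannihilator := by
    intro f hf x hx
    rw [Submodule.mem_dualCoannihilator] at hx ⊢
    intro ψ hψ
    have : (ψ ∘ₗ f) x = 0 := hx _ (hΨright ψ hψ f hf)
    simpa using this
  have hW'bot : Ψ.dualCoannihilator = ⊥ := by
    rcases hirr _ hW'inv with h | h
    · exact h
    · exfalso
      have : u₀ ∈ Ψ.dualCoannihilator := h ▸ Submodule.mem_top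
      rw [Submodule.mem_dualCoannihilator] at this
      exact hφu₀ (this φ hφΨ)
  have hΨtop : Ψ = ⊤ := by
    apply Submodule.eq_top_of_finrank_eq
    have h1 := Subspace.finrank_add_finrank_dualCoannihilator_eq Ψ
    rw [hW'bot, finrank_bot, add_zero] at h1
    rw [h1, Subspace.dual_finrank_eq]
  rw [Submodule.eq_top_iff']
  intro f
  set b := Module.finBasis K V with hb
  have hfsum : f = ∑ i, LinearMap.toSpanSingleton K V (f (b i)) ∘ₗ (b.coord i) := by
    ext x
    rw [LinearMap.sum_apply]
    simp only [LinearMap.comp_apply, LinearMap.toSpanSingleton_apply, Basis.coord_apply]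
    conv_lhs => rw [← b.sum_repr x]
    rw [map_sum]
    simp [map_smul]
  rw [hfsum]
  apply Submodule.sum_mem
  intro i _
  have : b.coord i ∈ Ψ := hΨtop ▸ Submodule.mem_top
  exact this (f (b i))

end Burnside

theorem stmt_18 {K A : Type*} [Field K] [IsAlgClosed K] [NonUnitalNonAssocRing A]
    [Module K A] [IsScalarTower K A A] [SMulCommClass K A A]
    [FiniteDimensional K A] (h2 : (2 : K) ≠ 0)
    (shift : ∀ x y z : A, (x * y) * z = y * (z * x))
    (hmul : ∃ x y : A, x * y ≠ 0)
    (hsimple : ∀ I : Submodule K A, (∀ a x : A, x ∈ I → a * x ∈ I) →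
      (∀ a x : A, x ∈ I → x * a ∈ I) → I = ⊥ ∨ I = ⊤) :
    Module.finrank K A = 1 ∧
      ∃ f : A ≃ₗ[K] K, ∀ x y : A, f (x * y) = f x * f y := by
  obtain ⟨x₀, y₀, hxy⟩ := hmul
  set L : A →ₗ[K] A →ₗ[K] A := LinearMap.mul K A with hLdef
  set R : A →ₗ[K] A →ₗ[K] A := (LinearMap.mul K A).flip with hRdef
  have hLa : ∀ a x : A, L a x = a * x := fun a x => rfl
  have hRa : ∀ a x : A, R a x = x * a := fun a x => rfl
  have lemL : ∀ x y : A, L (x * y) = L y ∘ₗ R x := by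
    intro x y; ext z
    simp only [hLa, LinearMap.comp_apply, hRa]
    exact shift x y z
  have lemR : ∀ x y : A, R (x * y) = R x ∘ₗ L y := by
    intro x y; ext z
    simp only [hRa, hLa, LinearMap.comp_apply]
    exact (shift y z x).symm
  have op3 : ∀ u v : A, L u ∘ₗ L v = R v ∘ₗ R u := by
    intro u v; ext x
    simp only [LinearMap.comp_apply, hLa, hRa]
    exact (shift x u v).symm
  set Pr : Set A := {z : A | ∃ x y : A, x * y = z} with hPr
  have hPtop : Submodule.span K Pr = ⊤ := by
    rcases hsimple (Submodule.span K Pr)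
        (fun a x _ => Submodule.subset_span ⟨a, x, rfl⟩)
        (fun a x _ => Submodule.subset_span ⟨x, a, rfl⟩) with h | h
    · exfalso
      have : x₀ * y₀ ∈ Submodule.span K Pr := Submodule.subset_span ⟨x₀, y₀, rfl⟩
      rw [h] at this
      exact hxy (by simpa using this)
    · exact h
  set Ann : Submodule K A :=
    { carrier := {a : A | (∀ x : A, a * x = 0) ∧ (∀ x : A, x * a = 0)}
      zero_mem' := ⟨fun x => zero_mul x, fun x => mul_zero x⟩
      add_mem' := fun {a b} ha hb =>
        ⟨fun x => by rw [add_mul, ha.1, hb.1, add_zero],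
         fun x => by rw [mul_add, ha.2, hb.2, add_zero]⟩
      smul_mem' := fun c a ha =>
        ⟨fun x => by rw [smul_mul_assoc, ha.1, smul_zero],
         fun x => by rw [mul_smul_comm, ha.2, smul_zero]⟩ } with hAnnDef
  have hAnn : Ann = ⊥ := by
    have hcl1 : ∀ a x : A, x ∈ Ann → a * x ∈ Ann := by
      intro a x hx
      refine ⟨fun t => ?_, fun t => ?_⟩
      · rw [shift a x t, hx.1 (t * a)]
      · rw [← shift x t a, hx.1 t]
        exact zero_mul a
    have hcl2 : ∀ a x : A, x ∈ Ann → x * a ∈ Ann := by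
      intro a x hx
      refine ⟨fun t => ?_, fun t => ?_⟩
      · rw [shift x a t, hx.2 t]
        exact mul_zero a
      · rw [← shift a t x, hx.2 (a * t)]
    rcases hsimple Ann hcl1 hcl2 with h | h
    · exact h
    · exfalso
      have hx₀ : x₀ ∈ Ann := h ▸ Submodule.mem_top
      exact hxy (hx₀.1 y₀)
  have hLL : ∀ u v : A, L u ∘ₗ L v ∈ LinearMap.range L := by
    intro u v
    have hu : u ∈ Submodule.span K Pr := by rw [hPtop]; trivial
    induction hu using Submodule.span_induction with
    | mem w hw =>
      obtain ⟨x, yy, rfl⟩ := hw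
      rw [lemL x yy, LinearMap.comp_assoc, ← lemR x v, ← lemL (x * v) yy]
      exact LinearMap.mem_range_self L _
    | zero => rw [map_zero, LinearMap.zero_comp]; exact Submodule.zero_mem _
    | add u₁ u₂ _ _ h₁ h₂ =>
      rw [map_add, LinearMap.add_comp]; exact Submodule.add_mem _ h₁ h₂
    | smul c u₁ _ h₁ =>
      rw [map_smul, LinearMap.smul_comp]; exact Submodule.smul_mem _ c h₁
  have hRR : ∀ v u : A, R v ∘ₗ R u ∈ LinearMap.range R := by
    intro v u
    have hv : v ∈ Submodule.span K Pr := by rw [hPtop]; trivial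
    induction hv using Submodule.span_induction with
    | mem w hw =>
      obtain ⟨x, yy, rfl⟩ := hw
      rw [lemR x yy, LinearMap.comp_assoc, ← lemL u yy, ← lemR x (u * yy)]
      exact LinearMap.mem_range_self R _
    | zero => rw [map_zero, LinearMap.zero_comp]; exact Submodule.zero_mem _
    | add u₁ u₂ _ _ h₁ h₂ =>
      rw [map_add, LinearMap.add_comp]; exact Submodule.add_mem _ h₁ h₂
    | smul c u₁ _ h₁ =>
      rw [map_smul, LinearMap.smul_comp]; exact Submodule.smul_mem _ c h₁
  set VV : Submodule K (A →ₗ[K] A) := LinearMap.range L ⊔ LinearMap.range R with hVV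
  have hVcomp : ∀ f ∈ VV, ∀ g ∈ VV, f ∘ₗ g ∈ VV := by
    intro f hf g hg
    obtain ⟨f₁, hf₁, f₂, hf₂, rfl⟩ := Submodule.mem_sup.mp hf
    obtain ⟨g₁, hg₁, g₂, hg₂, rfl⟩ := Submodule.mem_sup.mp hg
    obtain ⟨a, rfl⟩ := hf₁
    obtain ⟨b, rfl⟩ := hf₂
    obtain ⟨c, rfl⟩ := hg₁
    obtain ⟨d, rfl⟩ := hg₂
    rw [LinearMap.add_comp, LinearMap.comp_add, LinearMap.comp_add]
    refine Submodule.add_mem _ (Submodule.add_mem _ ?_ ?_) (Submodule.add_mem _ ?_ ?_)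
    · exact Submodule.mem_sup_left (hLL a c)
    · rw [← lemL d a]; exact Submodule.mem_sup_left (LinearMap.mem_range_self L _)
    · rw [← lemR b c]; exact Submodule.mem_sup_right (LinearMap.mem_range_self R _)
    · exact Submodule.mem_sup_right (hRR b d)
  have hVirr : ∀ W : Submodule K A, (∀ f ∈ VV, ∀ x ∈ W, f x ∈ W) → W = ⊥ ∨ W = ⊤ := by
    intro W hW
    apply hsimple W
    · intro a x hx
      exact hW (L a) (Submodule.mem_sup_left (LinearMap.mem_range_self L a)) x hx
    · intro a x hx
      exact hW (R a) (Submodule.mem_sup_right (LinearMap.mem_range_self R a)) x hx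
  have hVne : VV ≠ ⊥ := by
    intro hbot
    have hmem : L x₀ ∈ VV := Submodule.mem_sup_left (LinearMap.mem_range_self L x₀)
    rw [hbot] at hmem
    have hz : L x₀ = 0 := by simpa using hmem
    apply hxy
    have := congrArg (fun f : A →ₗ[K] A => f y₀) hz
    simpa [hLa] using this
  have hVtop : VV = ⊤ := my_burnside VV hVcomp hVirr hVne
  have hinf : LinearMap.range L ⊓ LinearMap.range R ≠ ⊥ := by
    intro hbot
    have hzero : ∀ u v : A, L u ∘ₗ L v = 0 := by
      intro u v
      have h1 : L u ∘ₗ L v ∈ LinearMap.range L ⊓ LinearMap.range R := by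
        refine ⟨hLL u v, ?_⟩
        rw [op3 u v]
        exact hRR v u
      rw [hbot] at h1
      simpa using h1
    have hzero' : ∀ u v x : A, u * (v * x) = 0 := by
      intro u v x
      have := congrArg (fun f : A →ₗ[K] A => f x) (hzero u v)
      simpa [hLa] using this
    have hc : (x₀ * y₀ : A) ∈ Ann := by
      refine ⟨fun t => ?_, fun t => ?_⟩
      · rw [shift x₀ y₀ t]; exact hzero' y₀ t x₀
      · exact hzero' t x₀ y₀
    rw [hAnn] at hc
    exact hxy (by simpa using hc)
  have hEnd : Module.finrank K (A →ₗ[K] A) = Module.finrank K A * Module.finrank K A :=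
    Module.finrank_linearMap K K A A
  have hsum := Submodule.finrank_sup_add_finrank_inf_eq (LinearMap.range L) (LinearMap.range R)
  have hLle : Module.finrank K (LinearMap.range L) ≤ Module.finrank K A :=
    LinearMap.finrank_range_le L
  have hRle : Module.finrank K (LinearMap.range R) ≤ Module.finrank K A :=
    LinearMap.finrank_range_le R
  have hinfpos : 0 < Module.finrank K
      (LinearMap.range L ⊓ LinearMap.range R : Submodule K (A →ₗ[K] A)) := by
    rcases Nat.eq_zero_or_pos (Module.finrank K
      (LinearMap.range L ⊓ LinearMap.range R : Submodule K (A →ₗ[K] A))) with h | h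
    · exact absurd (Submodule.finrank_eq_zero.mp h) hinf
    · exact h
  have htopfin : Module.finrank K
      (LinearMap.range L ⊔ LinearMap.range R : Submodule K (A →ₗ[K] A)) =
      Module.finrank K A * Module.finrank K A := by
    rw [← hVV, hVtop, finrank_top, hEnd]
  have hn1 : Module.finrank K A = 1 := by
    set n := Module.finrank K A with hn
    rw [htopfin] at hsum
    have hub : n * n + 1 ≤ n + n := by omega
    have hle1 : n ≤ 1 := by
      by_contra hcon
      push_neg at hcon
      have h2n : 2 * n ≤ n * n := Nat.mul_le_mul_right n (by omega)
      omega
    have hge1 : 1 ≤ n := by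
      by_contra hcon
      push_neg at hcon
      have hn0 : n = 0 := by omega
      rw [hn0] at hub
      omega
    omega
  refine ⟨hn1, ?_⟩
  set b : Basis (Fin 1) K A := Module.finBasisOfFinrankEq K A hn1 with hbdef
  set e0 : A := b 0 with he0
  set μ : K := b.repr (e0 * e0) 0 with hμ
  have hrepr : ∀ x : A, x = b.repr x 0 • e0 := by
    intro x
    conv_lhs => rw [← b.sum_repr x]
    rw [Fin.sum_univ_one]
  have hprod : ∀ x z : A, x * z = (b.repr x 0 * b.repr z 0 * μ) • e0 := by
    intro x z
    calc x * z = (b.repr x 0 • e0) * (b.repr z 0 • e0) := by rw [← hrepr x, ← hrepr z]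
      _ = (b.repr x 0 * b.repr z 0) • (e0 * e0) := by
          rw [smul_mul_assoc, mul_smul_comm, smul_smul]
      _ = (b.repr x 0 * b.repr z 0) • (μ • e0) := by
          congr 1
          exact hrepr (e0 * e0)
      _ = (b.repr x 0 * b.repr z 0 * μ) • e0 := by rw [smul_smul]
  have hμne : μ ≠ 0 := by
    intro hc
    apply hxy
    rw [hprod x₀ y₀, hc, mul_zero, zero_smul]
  have hre : b.repr e0 0 = 1 := by rw [he0]; simp
  set f : A ≃ₗ[K] K :=
    (b.repr ≪≫ₗ (Finsupp.LinearEquiv.finsuppUnique K K (Fin 1))) ≪≫ₗ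
      (LinearEquiv.smulOfNeZero K K μ hμne) with hf
  have hfx : ∀ x : A, f x = μ * b.repr x 0 := by
    intro x
    rw [hf]
    simp only [LinearEquiv.trans_apply]
    have h1 : (Finsupp.LinearEquiv.finsuppUnique K K (Fin 1)) (b.repr x) = b.repr x 0 := by
      simp [Finsupp.LinearEquiv.finsuppUnique]
    rw [h1]
    rfl
  refine ⟨f, fun x z => ?_⟩
  rw [hfx, hfx, hfx, hprod x z]
  have hco : b.repr ((b.repr x 0 * b.repr z 0 * μ) • e0) 0
      = b.repr x 0 * b.repr z 0 * μ := by
    rw [map_smul]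
    simp [hre]
  rw [hco]
  ring
end

section
/- The 5-dimensional algebra with basis e1,...,e5 and nonzero products e1e1 = e3, e1e2 = e4, e2e3 = e5, e4e1 = e5 is shift associative but not associative. -/
/-- Multiplication on `Fin 5 → ℂ` given by the structure constants
`e1*e1 = e3`, `e1*e2 = e4`, `e2*e3 = e5`, `e4*e1 = e5`
(with basis indexed from `0`). -/
def mulA (x y : Fin 5 → ℂ) : Fin 5 → ℂ := fun k =>
  x 0 * y 0 * (if k = 2 then 1 else 0) +
  x 0 * y 1 * (if k = 3 then 1 else 0) +
  x 1 * y 2 * (if k = 4 then 1 else 0) +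
  x 3 * y 0 * (if k = 4 then 1 else 0)

theorem stmt_19 :
    (∀ x y z : Fin 5 → ℂ, mulA (mulA x y) z = mulA y (mulA z x)) ∧
    ¬ (∀ x y z : Fin 5 → ℂ, mulA (mulA x y) z = mulA x (mulA y z)) := by
  constructor
  · intro x y z
    funext k
    fin_cases k <;> simp [mulA] <;> ring
  · intro h
    have := congrFun (h (fun i => if i = 0 then 1 else 0)
      (fun i => if i = 1 then 1 else 0) (fun i => if i = 0 then 1 else 0)) 4
    simp [mulA] at this
end
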